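/- arXiv:2110.09322 — 4 statements merged into one kernel-verified Lean document; each statement's English description precedes it below -/
import Mathlib

section
/- Let G be a finite group of order r ≥ 3, let d ≥ 1, and let ρ : G → O(d) be an orthogonal representation of G on ℝ^d having no trivial subrepresentation (i.e., the only vector v ∈ ℝ^d with ρ(g)v = v for all g ∈ G is v = 0). Set N = (r-2)(d+1)+2. Then for every tuple of points p_1, …, p_N ∈ ℝ^d there exist a function c : {1,…,N} → G, points x_g ∈ convexHull{p_j : c(j) = g} for each g ∈ G, and points a, u ∈ ℝ^d such that x_g = a + ρ(g)u for all g ∈ G. -/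
open MeasureTheory

private lemma exists_weights_of_mem_convexHull_range {ι E : Type*} [Fintype ι]
    [AddCommGroup E] [Module ℝ E] (f : ι → E) {x : E}
    (hx : x ∈ convexHull ℝ (Set.range f)) :
    ∃ μ : ι → ℝ, (∀ i, 0 ≤ μ i) ∧ ∑ i, μ i = 1 ∧ ∑ i, μ i • f i = x := by
  classical
  rw [convexHull_range_eq_exists_affineCombination] at hx
  obtain ⟨s, w, hw0, hw1, hx⟩ := hx
  refine ⟨fun i => if i ∈ s then w i else 0, ?_, ?_, ?_⟩
  · intro i
    by_cases h : i ∈ s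
    · simp [h, hw0 i h]
    · simp [h]
  · rw [Finset.sum_ite_mem, Finset.univ_inter]
    exact hw1
  · rw [Finset.affineCombination_eq_linear_combination s f w hw1] at hx
    rw [← hx]
    simp only [ite_smul, zero_smul]
    rw [Finset.sum_ite_mem, Finset.univ_inter]

open Finset Metric RealInnerProductSpace in
private lemma colorful_caratheodory {E : Type*} [NormedAddCommGroup E]
    [InnerProductSpace ℝ E] [FiniteDimensional ℝ E]
    {ι κ : Type*} [Fintype ι] [Fintype κ] [Nonempty κ]
    (hcard : Module.finrank ℝ E < Fintype.card ι) (v : ι → κ → E)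
    (hv : ∀ i, (0 : E) ∈ convexHull ℝ (Set.range (v i))) :
    ∃ c : ι → κ, (0 : E) ∈
      convexHull ℝ (Set.range fun i => v i (c i)) := by
  classical
  have hι : Nonempty ι := Fintype.card_pos_iff.mp (by omega)
  obtain ⟨c, -, hmin⟩ := Finset.exists_min_image Finset.univ
    (fun c : ι → κ => infDist 0 (convexHull ℝ (Set.range fun i => v i (c i))))
    ⟨Classical.arbitrary _, Finset.mem_univ _⟩
  refine ⟨c, ?_⟩
  by_contra h0K
  set K : Set E := convexHull ℝ (Set.range fun i => v i (c i)) with hK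
  have hKc : IsCompact K := (Set.finite_range _).isCompact_convexHull ℝ
  have hKconv : Convex ℝ K := convex_convexHull ℝ _
  have hKne : K.Nonempty := (Set.range_nonempty _).convexHull
  obtain ⟨z, hzK, hdz⟩ := hKc.exists_infDist_eq_dist hKne 0
  have hzne : z ≠ 0 := fun h => h0K (h ▸ hzK)
  -- variational inequality
  have hproj : ∀ w ∈ K, ‖z‖ ^ 2 ≤ ⟪z, w⟫ := by
    have h1 : ‖(0 : E) - z‖ = ⨅ w : K, ‖(0 : E) - w‖ := by
      calc ‖(0 : E) - z‖ = dist (0 : E) z := (dist_eq_norm _ _).symm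
        _ = infDist (0 : E) K := hdz.symm
        _ = ⨅ w : K, dist (0 : E) w := infDist_eq_iInf
        _ = ⨅ w : K, ‖(0 : E) - w‖ := by simp only [dist_eq_norm]
    intro w hw
    have h3 := (norm_eq_iInf_iff_real_inner_le_zero hKconv hzK).mp h1 w hw
    rw [zero_sub, inner_neg_left, inner_sub_right, real_inner_self_eq_norm_sq] at h3
    linarith
  obtain ⟨μ, hμ0, hμ1, hμz⟩ := exists_weights_of_mem_convexHull_range _ hzK
  have hinner : ∀ i, ‖z‖ ^ 2 ≤ ⟪z, v i (c i)⟫ := fun i =>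
    hproj _ (subset_convexHull ℝ _ (Set.mem_range_self i))
  have hsum0 : ∑ i, μ i * (⟪z, v i (c i)⟫ - ‖z‖ ^ 2) = 0 := by
    have e1 : ∑ i, μ i * ⟪z, v i (c i)⟫ = ‖z‖ ^ 2 := by
      have h2 := congrArg (fun y => ⟪z, y⟫) hμz
      simpa [inner_sum, real_inner_smul_right, real_inner_self_eq_norm_sq] using h2
    simp only [mul_sub, Finset.sum_sub_distrib, e1, ← Finset.sum_mul, hμ1, one_mul, sub_self]
  have hface : ∀ i, μ i ≠ 0 → ⟪z, v i (c i)⟫ = ‖z‖ ^ 2 := by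
    intro i hi
    have h5 := (Finset.sum_eq_zero_iff_of_nonneg
      (fun i _ => mul_nonneg (hμ0 i) (by linarith [hinner i]))).mp hsum0 i (Finset.mem_univ i)
    rcases mul_eq_zero.mp h5 with h | h
    · exact absurd h hi
    · linarith
  -- z is in the hull of the "tight" points
  set S : Set E := (fun i => v i (c i)) '' {i | μ i ≠ 0} with hS
  have hfs : ∑ i ∈ Finset.univ.filter (fun i => μ i ≠ 0), μ i = 1 := by
    rw [Finset.sum_filter_ne_zero]
    exact hμ1
  have hzS : z ∈ convexHull ℝ S := by
    have hcm : (Finset.univ.filter (fun i => μ i ≠ 0)).centerMass μ (fun i => v i (c i)) = z := by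
      rw [Finset.centerMass_eq_of_sum_1 _ _ hfs, ← hμz]
      exact Finset.sum_filter_of_ne (fun x _ hx h0 => hx (by rw [h0, zero_smul]))
    rw [← hcm]
    exact Finset.centerMass_mem_convexHull _ (fun i _ => hμ0 i) (by rw [hfs]; norm_num)
      (fun i hi => Set.mem_image_of_mem _ (by simpa using (Finset.mem_filter.mp hi).2))
  rw [convexHull_eq_union] at hzS
  simp only [Set.mem_iUnion] at hzS
  obtain ⟨t, hts, hai, hzt⟩ := hzS
  have hlt : ∀ y ∈ (↑t : Set E), ⟪z, y⟫ = ‖z‖ ^ 2 := by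
    intro y hy
    obtain ⟨i, hi, rfl⟩ := hts hy
    exact hface i hi
  -- cardinality bound via the hyperplane
  have htcard : t.card ≤ Module.finrank ℝ E := by
    rcases Finset.eq_empty_or_nonempty t with rfl | htne
    · simp
    · haveI : Nonempty ↥t := Finset.nonempty_coe_sort.mpr htne
      have h6 := hai.finrank_vectorSpan_add_one
      set lz : E →ₗ[ℝ] ℝ := (innerSL ℝ z : E →L[ℝ] ℝ).toLinearMap with hlz
      have hker : vectorSpan ℝ (Set.range ((↑) : t → E)) ≤ LinearMap.ker lz := by
        rw [vectorSpan_def, Submodule.span_le]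
        rintro y ⟨y1, hy1, y2, hy2, rfl⟩
        have hy1' : (y1 : E) ∈ (↑t : Set E) := by
          rw [Subtype.range_coe] at hy1; exact hy1
        have hy2' : (y2 : E) ∈ (↑t : Set E) := by
          rw [Subtype.range_coe] at hy2; exact hy2
        have : lz (y1 -ᵥ y2) = 0 := by
          simp only [hlz, vsub_eq_sub, ContinuousLinearMap.coe_coe, innerSL_apply_apply,
            inner_sub_right]
          rw [hlt y1 hy1', hlt y2 hy2', sub_self]
        simpa [LinearMap.mem_ker] using this
      have hkerrank : Module.finrank ℝ (LinearMap.ker lz) + 1 = Module.finrank ℝ E := by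
        have h7 := lz.finrank_range_add_finrank_ker
        have h8 : LinearMap.range lz = ⊤ := by
          rw [LinearMap.range_eq_top]
          intro x
          refine ⟨(x / ‖z‖ ^ 2) • z, ?_⟩
          have hz2 : ‖z‖ ^ 2 ≠ 0 := pow_ne_zero 2 (norm_ne_zero_iff.mpr hzne)
          simp only [hlz, ContinuousLinearMap.coe_coe, innerSL_apply_apply, real_inner_smul_right,
            real_inner_self_eq_norm_sq]
          field_simp
        rw [h8, finrank_top] at h7
        have h9 : Module.finrank ℝ ℝ = 1 := Module.finrank_self ℝ
        omega
      have h11 := Submodule.finrank_mono hker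
      have h12 : Fintype.card ↥t = t.card := Fintype.card_coe t
      omega
  -- find an unused index j
  have hts' : ∀ y : ↥t, ∃ i : ι, v i (c i) = (y : E) := fun y => by
    obtain ⟨i, _, hi⟩ := hts y.2; exact ⟨i, hi⟩
  choose ch hch using hts'
  have hjex : ∃ j : ι, j ∉ t.attach.image ch := by
    by_contra h
    push_neg at h
    have h13 : t.attach.image ch = Finset.univ := Finset.eq_univ_iff_forall.mpr h
    have h14 := Finset.card_image_le (f := ch) (s := t.attach)
    rw [h13, Finset.card_univ, Finset.card_attach] at h14
    omega
  obtain ⟨j, hj⟩ := hjex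
  have htsub : (↑t : Set E) ⊆ (fun i => v i (c i)) '' {i | i ≠ j} := by
    intro y hy
    refine ⟨ch ⟨y, hy⟩, ?_, hch ⟨y, hy⟩⟩
    intro h
    exact hj (h ▸ Finset.mem_image_of_mem ch (Finset.mem_attach t ⟨y, hy⟩))
  -- find a good color for j
  have hgex : ∃ g : κ, ⟪z, v j g⟫ ≤ 0 := by
    by_contra h
    push_neg at h
    have hlin : IsLinearMap ℝ (fun y : E => ⟪z, y⟫) :=
      ⟨fun a b => inner_add_right _ _ _, fun c x => real_inner_smul_right _ _ _⟩
    have hcv : Convex ℝ {y : E | 0 < ⟪z, y⟫} := convex_halfSpace_gt hlin 0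
    have h0 : (0 : E) ∈ {y : E | 0 < ⟪z, y⟫} :=
      convexHull_min (fun y hy => by obtain ⟨g, rfl⟩ := hy; exact h g) hcv (hv j)
    simp at h0
  obtain ⟨g, hg⟩ := hgex
  -- the improved selection
  set c' := Function.update c j g with hc'
  set K' : Set E := convexHull ℝ (Set.range fun i => v i (c' i)) with hK'
  have hzK' : z ∈ K' := by
    have h11 : (↑t : Set E) ⊆ Set.range fun i => v i (c' i) := by
      intro y hy
      obtain ⟨i, hij, rfl⟩ := htsub hy
      have hij' : i ≠ j := hij
      exact ⟨i, by simp only [hc', Function.update_of_ne hij']⟩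
    exact convexHull_mono h11 hzt
  have hwK' : v j g ∈ K' := subset_convexHull ℝ _ ⟨j, by simp [hc']⟩
  set b := ‖v j g‖ ^ 2 with hbdef
  set a := ‖z‖ ^ 2 with hadef
  have ha : 0 < a := by
    have := norm_pos_iff.mpr hzne
    positivity
  have hb : 0 ≤ b := by positivity
  set t₀ := a / (a + b) with ht₀def
  have hab : 0 < a + b := by linarith
  have ht0 : 0 < t₀ := div_pos ha hab
  have ht1 : t₀ ≤ 1 := by rw [div_le_one hab]; linarith
  set y := (1 - t₀) • z + t₀ • (v j g) with hy
  have hyK' : y ∈ K' := (convex_convexHull ℝ _) hzK' hwK' (by linarith) ht0.le (by ring)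
  have hy2 : ‖y‖ ^ 2 = (1 - t₀) ^ 2 * a + 2 * ((1 - t₀) * t₀) * ⟪z, v j g⟫ + t₀ ^ 2 * b := by
    rw [hy, ← real_inner_self_eq_norm_sq]
    simp only [inner_add_left, inner_add_right, real_inner_smul_left, real_inner_smul_right]
    rw [real_inner_self_eq_norm_sq, real_inner_self_eq_norm_sq, real_inner_comm (v j g) z]
    rw [← hadef, ← hbdef]
    ring
  have hident : t₀ * (a + b) = a := div_mul_cancel₀ a (ne_of_gt hab)
  have hylt : ‖y‖ ^ 2 < a := by
    nlinarith [mul_nonneg (mul_nonneg (sub_nonneg.mpr ht1) ht0.le) (neg_nonneg.mpr hg)]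
  have hnlt : ‖y‖ < ‖z‖ := by
    have : ‖y‖ ^ 2 < ‖z‖ ^ 2 := by rw [← hadef]; exact hylt
    exact lt_of_pow_lt_pow_left₀ 2 (norm_nonneg z) this
  have hchain := hmin c' (Finset.mem_univ _)
  have hfc : infDist (0 : E) K = ‖z‖ := by rw [hdz, dist_zero_left]
  have hfc' : infDist (0 : E) K' ≤ ‖y‖ := by
    have := infDist_le_dist_of_mem (x := (0 : E)) hyK'
    rwa [dist_zero_left] at this
  rw [← hK', hfc] at hchain
  linarith

theorem orbit_partition_existence
    (G : Type*) [Group G] [Fintype G] (r d : ℕ) (hr : 3 ≤ r)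
    (hcard : Fintype.card G = r) (hd : 1 ≤ d)
    (ρ : G →* (EuclideanSpace ℝ (Fin d) ≃ₗᵢ[ℝ] EuclideanSpace ℝ (Fin d)))
    (hnotriv : ∀ v : EuclideanSpace ℝ (Fin d), (∀ g : G, ρ g v = v) → v = 0)
    (N : ℕ) (hN : N = (r - 2) * (d + 1) + 2)
    (p : Fin N → EuclideanSpace ℝ (Fin d)) :
    ∃ (c : Fin N → G) (x : G → EuclideanSpace ℝ (Fin d))
      (a u : EuclideanSpace ℝ (Fin d)),
      (∀ g : G, x g ∈ convexHull ℝ (p '' {j | c j = g})) ∧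
      (∀ g : G, x g = a + ρ g u) := by
  classical
  have hG : Nonempty G := Fintype.card_pos_iff.mp (by omega)
  -- the linear parametrization of orbit tuples
  let ψ : (EuclideanSpace ℝ (Fin d) × EuclideanSpace ℝ (Fin d) × ℝ) →ₗ[ℝ]
      ((G → EuclideanSpace ℝ (Fin d)) × (G → ℝ)) :=
    LinearMap.prod
      (LinearMap.pi fun g => LinearMap.fst ℝ _ _ +
        ((ρ g).toLinearEquiv.toLinearMap.comp
          ((LinearMap.fst ℝ (EuclideanSpace ℝ (Fin d)) ℝ).comp
            (LinearMap.snd ℝ (EuclideanSpace ℝ (Fin d)) (EuclideanSpace ℝ (Fin d) × ℝ)))))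
      (LinearMap.pi fun _ => (LinearMap.snd ℝ (EuclideanSpace ℝ (Fin d)) ℝ).comp
        (LinearMap.snd ℝ (EuclideanSpace ℝ (Fin d)) (EuclideanSpace ℝ (Fin d) × ℝ)))
  have hψ : ∀ aus : EuclideanSpace ℝ (Fin d) × EuclideanSpace ℝ (Fin d) × ℝ,
      ψ aus = (fun g => aus.1 + ρ g aus.2.1, fun _ => aus.2.2) := fun _ => rfl
  have hinj : Function.Injective ψ := by
    rw [← LinearMap.ker_eq_bot, LinearMap.ker_eq_bot']
    rintro ⟨a, u, s⟩ h
    rw [hψ] at h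
    have h1 : ∀ g : G, a + ρ g u = 0 := fun g => congrFun (congrArg Prod.fst h) g
    have h2 : s = 0 := congrFun (congrArg Prod.snd h) (Classical.arbitrary G)
    have h3 : a + u = 0 := by have := h1 1; simpa using this
    have h4 : u = 0 := by
      apply hnotriv
      intro g
      have h5 : ρ g u = -a := eq_neg_of_add_eq_zero_right (h1 g)
      have h6 : u = -a := eq_neg_of_add_eq_zero_right h3
      rw [h5, h6]
    have h5 : a = 0 := by rw [h4, add_zero] at h3; exact h3
    simp [h4, h5, h2]
  set S' : Submodule ℝ ((G → EuclideanSpace ℝ (Fin d)) × (G → ℝ)) :=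
    LinearMap.range ψ with hS'
  have hrankS : Module.finrank ℝ S' = 2 * d + 1 := by
    rw [hS', LinearMap.finrank_range_of_inj hinj]
    rw [Module.finrank_prod, Module.finrank_prod, finrank_euclideanSpace_fin,
      Module.finrank_self]
    ring
  have hrankV : Module.finrank ℝ ((G → EuclideanSpace ℝ (Fin d)) × (G → ℝ)) = r * d + r := by
    rw [Module.finrank_prod, Module.finrank_pi_fintype, Module.finrank_pi]
    simp [finrank_euclideanSpace_fin, hcard, Finset.sum_const, Finset.card_univ, mul_comm]
  obtain ⟨k, hk⟩ : ∃ k, r = k + 2 := ⟨r - 2, by omega⟩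
  set m := (r - 2) * (d + 1) + 1 with hm
  have hrankQ :
      Module.finrank ℝ ((((G → EuclideanSpace ℝ (Fin d)) × (G → ℝ))) ⧸ S') = m := by
    have h6 := Submodule.finrank_quotient_add_finrank S'
    rw [hrankS, hrankV] at h6
    have h7 : m + (2 * d + 1) = r * d + r := by
      subst hk
      simp only [hm, Nat.add_sub_cancel]
      ring
    exact Nat.add_right_cancel (h6.trans h7.symm)
  let e : ((((G → EuclideanSpace ℝ (Fin d)) × (G → ℝ))) ⧸ S') ≃ₗ[ℝ]
      EuclideanSpace ℝ (Fin m) :=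
    LinearEquiv.ofFinrankEq _ _ (by rw [hrankQ, finrank_euclideanSpace_fin])
  let Φ := e.toLinearMap ∘ₗ S'.mkQ
  have hker : LinearMap.ker Φ = S' := by
    show LinearMap.ker (e.toLinearMap ∘ₗ S'.mkQ) = S'
    rw [LinearMap.ker_comp, LinearEquiv.ker, Submodule.comap_bot, Submodule.ker_mkQ]
  let w : Fin N → G → ((G → EuclideanSpace ℝ (Fin d)) × (G → ℝ)) :=
    fun j g => (Pi.single g (p j), Pi.single g (1 : ℝ))
  have hconst : ∀ j, ∑ g : G, w j g = (fun _ => p j, fun _ => (1 : ℝ)) := by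
    intro j
    refine Prod.ext ?_ ?_
    · rw [Prod.fst_sum]
      funext g'
      rw [Finset.sum_apply]
      exact Fintype.sum_pi_single' g' (p j) ▸ (by simp [w, Fintype.sum_pi_single])
    · rw [Prod.snd_sum]
      funext g'
      rw [Finset.sum_apply]
      simp [w, Fintype.sum_pi_single]
  have hconstS : ∀ j, ((fun _ => p j, fun _ => (1 : ℝ)) :
      (G → EuclideanSpace ℝ (Fin d)) × (G → ℝ)) ∈ S' := by
    intro j
    refine ⟨(p j, 0, 1), ?_⟩
    rw [hψ]
    simp
  let v : Fin N → G → EuclideanSpace ℝ (Fin m) := fun j g => Φ (w j g)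
  have hrpos : (0 : ℝ) < r := by positivity
  have hrne : (r : ℝ) ≠ 0 := ne_of_gt hrpos
  have hv : ∀ j, (0 : EuclideanSpace ℝ (Fin m)) ∈ convexHull ℝ (Set.range (v j)) := by
    intro j
    apply mem_convexHull_of_exists_fintype (fun _ : G => (r : ℝ)⁻¹) (v j)
    · intro g; positivity
    · rw [Finset.sum_const, Finset.card_univ, hcard, nsmul_eq_mul]
      field_simp
    · intro g; exact Set.mem_range_self g
    · show ∑ g : G, (r : ℝ)⁻¹ • Φ (w j g) = 0
      rw [← Finset.smul_sum, ← map_sum, hconst j]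
      have h0 : Φ ((fun _ => p j, fun _ => (1 : ℝ))) = 0 := by
        rw [← LinearMap.mem_ker, hker]
        exact hconstS j
      rw [h0, smul_zero]
  have hmlt : Module.finrank ℝ (EuclideanSpace ℝ (Fin m)) < Fintype.card (Fin N) := by
    rw [finrank_euclideanSpace_fin, Fintype.card_fin, hN, hm]
    exact Nat.lt_succ_self _
  obtain ⟨c, hc⟩ := colorful_caratheodory hmlt v hv
  obtain ⟨lam, hl0, hl1, hlsum⟩ := exists_weights_of_mem_convexHull_range _ hc
  have hmem : ∑ j, lam j • w j (c j) ∈ S' := by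
    rw [← hker, LinearMap.mem_ker, map_sum]
    simp only [_root_.map_smul]
    exact hlsum
  obtain ⟨⟨a, u, s⟩, hψeq⟩ := hmem
  rw [hψ] at hψeq
  have heq1 : ∀ g : G, a + ρ g u =
      ∑ j ∈ Finset.univ.filter (fun j => c j = g), lam j • p j := by
    intro g
    have h1 := congrFun (congrArg Prod.fst hψeq) g
    have h2 : a + ρ g u =
        ∑ j, lam j • ((Pi.single (c j) (p j) : G → EuclideanSpace ℝ (Fin d)) g) := by
      simpa [Prod.fst_sum, Prod.smul_fst, Finset.sum_apply, w] using h1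
    rw [h2, Finset.sum_filter]
    apply Finset.sum_congr rfl
    intro j _
    by_cases h : c j = g
    · subst h; simp
    · simp [Pi.single_apply, h, fun hh : g = c j => h hh.symm]
  have heq2 : ∀ g : G, s = ∑ j ∈ Finset.univ.filter (fun j => c j = g), lam j := by
    intro g
    have h1 := congrFun (congrArg Prod.snd hψeq) g
    have h2 : s = ∑ j, lam j * ((Pi.single (c j) (1 : ℝ) : G → ℝ) g) := by
      simpa [Prod.snd_sum, Prod.smul_snd, Finset.sum_apply, w, smul_eq_mul] using h1
    rw [h2, Finset.sum_filter]
    apply Finset.sum_congr rfl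
    intro j _
    by_cases h : c j = g
    · subst h; simp
    · simp [Pi.single_apply, h, fun hh : g = c j => h hh.symm]
  have hs : (r : ℝ) * s = 1 := by
    have h2 : ∑ g : G, ∑ j ∈ Finset.univ.filter (fun j => c j = g), lam j = ∑ j, lam j :=
      Finset.sum_fiberwise _ _ _
    rw [hl1] at h2
    calc (r : ℝ) * s = ∑ _g : G, s := by
          rw [Finset.sum_const, Finset.card_univ, hcard, nsmul_eq_mul]
      _ = ∑ g : G, ∑ j ∈ Finset.univ.filter (fun j => c j = g), lam j :=
          Finset.sum_congr rfl (fun g _ => heq2 g)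
      _ = 1 := h2
  have hspos : 0 < s := by nlinarith
  refine ⟨c, fun g => s⁻¹ • a + ρ g (s⁻¹ • u), s⁻¹ • a, s⁻¹ • u, ?_, fun g => rfl⟩
  intro g
  have hx : s⁻¹ • a + ρ g (s⁻¹ • u) =
      (Finset.univ.filter fun j => c j = g).centerMass lam p := by
    rw [Finset.centerMass, ← heq2 g, ← heq1 g, _root_.map_smul, ← smul_add]
  show s⁻¹ • a + ρ g (s⁻¹ • u) ∈ convexHull ℝ (p '' {j | c j = g})
  rw [hx]
  apply Finset.centerMass_mem_convexHull
  · intro i _; exact hl0 i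
  · rw [← heq2 g]; exact hspos
  · intro i hi
    exact ⟨i, (Finset.mem_filter.mp hi).2, rfl⟩
end

section
/- Let G be a finite group of order r ≥ 3, let d ≥ 1, and let ρ : G → O(d) be an orthogonal representation of G on ℝ^d having no trivial subrepresentation. Let N be a positive integer with N < (r-2)(d+1)+2. Then there exists a dense open subset S of (ℝ^d)^N whose complement has Lebesgue measure zero such that for every tuple (p_1,…,p_N) ∈ S there do NOT exist a function c : {1,…,N} → G, points x_g ∈ convexHull{p_j : c(j) = g} for each g ∈ G, and points a, u ∈ ℝ^d with x_g = a + ρ(g)u for all g ∈ G. -/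
open MeasureTheory Module Finset

section aux

lemma det_zero_of_not_inj {V : Type*} [AddCommGroup V] [Module ℝ V] [FiniteDimensional ℝ V]
    (f : V →ₗ[ℝ] V) (h : ¬ Function.Injective f) : LinearMap.det f = 0 := by
  by_contra h0
  apply h
  let b := Module.finBasis ℝ V
  have hu : IsUnit (LinearMap.toMatrix b b f).det := by
    rw [LinearMap.det_toMatrix] at *
    exact isUnit_iff_ne_zero.mpr h0
  have := (LinearEquiv.ofIsUnitDet hu).injective
  have he : ⇑(LinearEquiv.ofIsUnitDet hu) = ⇑f := rfl
  rwa [he] at this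

lemma null_image_of_lowdim
    {Q P : Type*} [NormedAddCommGroup Q] [NormedSpace ℝ Q] [FiniteDimensional ℝ Q]
    [NormedAddCommGroup P] [NormedSpace ℝ P] [FiniteDimensional ℝ P]
    [MeasurableSpace P] [BorelSpace P] (μ : Measure P) [μ.IsAddHaarMeasure]
    (hdim : finrank ℝ Q < finrank ℝ P)
    (f : Q → P) (U : Set Q) (hU : IsOpen U) (hf : DifferentiableOn ℝ f U) :
    μ (f '' U) = 0 := by
  classical
  set k := finrank ℝ P - finrank ℝ Q with hk
  have hkpos : 0 < k := Nat.sub_pos_of_lt hdim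
  set E0 := EuclideanSpace ℝ (Fin k) with hE0
  have hfr : finrank ℝ (Q × E0) = finrank ℝ P := by
    rw [finrank_prod]
    have : finrank ℝ E0 = k := finrank_euclideanSpace_fin
    omega
  set e : (Q × E0) ≃L[ℝ] P := ContinuousLinearEquiv.ofFinrankEq hfr with he
  set ℓ : P →L[ℝ] Q := (ContinuousLinearMap.fst ℝ Q E0).comp (e.symm : P →L[ℝ] Q × E0) with hℓ
  set H : P → P := fun z => f (ℓ z) with hH
  set s : Set P := e.symm ⁻¹' (U ×ˢ Set.univ) with hs
  have hso : IsOpen s := (hU.prod isOpen_univ).preimage e.symm.continuous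
  have hmem : ∀ z ∈ s, ℓ z ∈ U := fun z hz => (Set.mem_prod.1 hz).1
  have hder : ∀ z ∈ s, HasFDerivWithinAt H ((fderiv ℝ f (ℓ z)).comp ℓ) s z := by
    intro z hz
    have h1 : DifferentiableAt ℝ f (ℓ z) := hf.differentiableAt (hU.mem_nhds (hmem z hz))
    exact (h1.hasFDerivAt.comp z ℓ.hasFDerivAt).hasFDerivWithinAt
  have hdet : ∀ z ∈ s, ((fderiv ℝ f (ℓ z)).comp ℓ).det = 0 := by
    intro z hz
    have hnt : Nontrivial E0 := by
      have h2 : 0 < finrank ℝ E0 := by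
        show 0 < finrank ℝ (EuclideanSpace ℝ (Fin k))
        rw [finrank_euclideanSpace_fin]; exact hkpos
      exact nontrivial_of_finrank_pos h2
    obtain ⟨w, hw⟩ := exists_ne (0 : E0)
    set v : P := e (0, w) with hv
    have hv0 : v ≠ 0 := by
      simp only [hv, ne_eq, EmbeddingLike.map_eq_zero_iff, Prod.mk_eq_zero]
      tauto
    have hlv : ℓ v = 0 := by simp [hℓ, hv]
    have hker : ((fderiv ℝ f (ℓ z)).comp ℓ) v = 0 := by
      simp [ContinuousLinearMap.comp_apply, hlv]
    have hninj : ¬ Function.Injective ⇑(((fderiv ℝ f (ℓ z)).comp ℓ)) := by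
      intro hinj
      exact hv0 (hinj (by simpa using hker))
    exact det_zero_of_not_inj _ hninj
  have himg : f '' U ⊆ H '' s := by
    rintro _ ⟨x, hx, rfl⟩
    refine ⟨e (x, 0), ?_, ?_⟩
    · simp [hs, Set.mem_prod, hx]
    · simp [hH, hℓ]
  refine le_antisymm ?_ zero_le
  calc μ (f '' U) ≤ μ (H '' s) := measure_mono himg
    _ ≤ ∫⁻ z in s, ENNReal.ofReal |((fderiv ℝ f (ℓ z)).comp ℓ).det| ∂μ :=
        addHaar_image_le_lintegral_abs_det_fderiv μ hso.measurableSet hder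
    _ = ∫⁻ _ in s, 0 ∂μ := setLIntegral_congr_fun hso.measurableSet
          (fun z hz => by rw [hdet z hz]; simp)
    _ = 0 := by simp

lemma hull_weights {E : Type*} [AddCommGroup E] [Module ℝ E] {n : ℕ}
    (p : Fin n → E) (s : Set (Fin n)) (x : E) (hx : x ∈ convexHull ℝ (p '' s)) :
    ∃ lam : Fin n → ℝ, (∀ j, 0 ≤ lam j) ∧ (∀ j, j ∉ s → lam j = 0) ∧
      (∑ j, lam j = 1) ∧ (∑ j, lam j • p j = x) := by
  classical
  rw [_root_.convexHull_eq] at hx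
  obtain ⟨ι, t, w, z, hw0, hw1, hz, hcm⟩ := hx
  have hchoice : ∀ i : ι, ∃ j : Fin n, i ∈ t → (j ∈ s ∧ p j = z i) := by
    intro i
    by_cases hi : i ∈ t
    · obtain ⟨j, hj, hpj⟩ := hz i hi
      exact ⟨j, fun _ => ⟨hj, hpj⟩⟩
    · have hne : (p '' s).Nonempty := by
        rcases t.eq_empty_or_nonempty with rfl | ⟨i0, hi0⟩
        · simp at hw1
        · exact ⟨z i0, hz i0 hi0⟩
      obtain ⟨_, ⟨j, hj, _⟩⟩ := hne
      exact ⟨j, fun h => absurd h hi⟩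
  choose ji hji using hchoice
  refine ⟨fun j => ∑ i ∈ t.filter (fun i => ji i = j), w i, ?_, ?_, ?_, ?_⟩
  · intro j
    exact Finset.sum_nonneg fun i hi => hw0 i (Finset.mem_filter.1 hi).1
  · intro j hj
    apply Finset.sum_eq_zero
    intro i hi
    obtain ⟨hit, hjij⟩ := Finset.mem_filter.1 hi
    exact absurd (hjij ▸ (hji i hit).1) hj
  · rw [← hw1]
    exact (Finset.sum_fiberwise_of_maps_to (fun i _ => Finset.mem_univ (ji i)) w)
  · have h3 : ∀ j : Fin n, (∑ i ∈ t.filter (fun i => ji i = j), w i) • p j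
        = ∑ i ∈ t.filter (fun i => ji i = j), w i • z i := by
      intro j
      rw [Finset.sum_smul]
      apply Finset.sum_congr rfl
      intro i hi
      obtain ⟨hit, hjij⟩ := Finset.mem_filter.1 hi
      rw [← (hji i hit).2, hjij]
    simp_rw [h3]
    rw [Finset.sum_fiberwise_of_maps_to (fun i _ => Finset.mem_univ (ji i)) (fun i => w i • z i)]
    rw [← hcm, Finset.centerMass_eq_of_sum_1 _ _ hw1]

variable {G : Type*} [Group G] [Fintype G] {d N : ℕ}

/-- the linear map (a,u) ↦ (g ↦ a + ρ g u) -/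
noncomputable def Tmap (ρ : G →* (EuclideanSpace ℝ (Fin d) ≃ₗᵢ[ℝ] EuclideanSpace ℝ (Fin d))) :
    (EuclideanSpace ℝ (Fin d) × EuclideanSpace ℝ (Fin d)) →ₗ[ℝ]
      (G → EuclideanSpace ℝ (Fin d)) where
  toFun au := fun g => au.1 + ρ g au.2
  map_add' x y := by
    funext g
    show (x.1 + y.1) + ρ g (x.2 + y.2) = (x.1 + ρ g x.2) + (y.1 + ρ g y.2)
    rw [map_add]
    abel
  map_smul' t x := by
    funext g
    show (t • x.1) + ρ g (t • x.2) = t • (x.1 + ρ g x.2)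
    rw [_root_.map_smul, smul_add]

variable [DecidableEq G]

def fib (c : Fin N → G) (g : G) : Finset (Fin N) := Finset.univ.filter (fun j => c j = g)

noncomputable def Bset (ρ : G →* (EuclideanSpace ℝ (Fin d) ≃ₗᵢ[ℝ] EuclideanSpace ℝ (Fin d)))
    (c : Fin N → G) : Set (Fin N → EuclideanSpace ℝ (Fin d)) :=
  {p | ∃ lam : Fin N → ℝ, (∀ j, lam j ∈ Set.Icc (0:ℝ) 1) ∧
    (∀ g, ∑ j ∈ fib c g, lam j = 1) ∧
    (fun g => ∑ j ∈ fib c g, lam j • p j) ∈ LinearMap.range (Tmap ρ)}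

lemma Bset_closed (ρ : G →* (EuclideanSpace ℝ (Fin d) ≃ₗᵢ[ℝ] EuclideanSpace ℝ (Fin d)))
    (c : Fin N → G) : IsClosed (Bset ρ c) := by
  apply IsSeqClosed.isClosed
  intro pn p hpn hlim
  choose lam hlam01 hlamsum hlamW using hpn
  have hKc : IsCompact (Set.pi Set.univ (fun _ : Fin N => Set.Icc (0:ℝ) 1)) :=
    isCompact_univ_pi (fun _ => isCompact_Icc)
  have hK : ∀ n, lam n ∈ Set.pi Set.univ (fun _ : Fin N => Set.Icc (0:ℝ) 1) := by
    intro n j _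
    exact hlam01 n j
  obtain ⟨lam0, hlam0K, φ, hφ, hφlim⟩ := hKc.tendsto_subseq hK
  have hplim : ∀ j, Filter.Tendsto (fun k => pn (φ k) j) Filter.atTop (nhds (p j)) := by
    intro j
    exact (tendsto_pi_nhds.1 (hlim.comp hφ.tendsto_atTop)) j
  have hllim : ∀ j, Filter.Tendsto (fun k => lam (φ k) j) Filter.atTop (nhds (lam0 j)) := by
    intro j
    exact (tendsto_pi_nhds.1 hφlim) j
  have hsumlim : ∀ g, Filter.Tendsto
      (fun k => ∑ j ∈ fib c g, lam (φ k) j • pn (φ k) j) Filter.atTop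
      (nhds (∑ j ∈ fib c g, lam0 j • p j)) := by
    intro g
    exact tendsto_finset_sum _ (fun j _ => (hllim j).smul (hplim j))
  refine ⟨lam0, ?_, ?_, ?_⟩
  · intro j
    exact hlam0K j (Set.mem_univ j)
  · intro g
    have h1 : Filter.Tendsto (fun k => ∑ j ∈ fib c g, lam (φ k) j) Filter.atTop
        (nhds (∑ j ∈ fib c g, lam0 j)) := tendsto_finset_sum _ (fun j _ => hllim j)
    have h2 : (fun k => ∑ j ∈ fib c g, lam (φ k) j) = fun _ => (1:ℝ) := by
      funext k
      exact hlamsum (φ k) g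
    rw [h2] at h1
    exact (tendsto_nhds_unique tendsto_const_nhds h1).symm
  · have hWclosed : IsClosed ((LinearMap.range (Tmap ρ) :
        Submodule ℝ (G → EuclideanSpace ℝ (Fin d))) : Set (G → EuclideanSpace ℝ (Fin d))) :=
      Submodule.closed_of_finiteDimensional _
    have hxlim : Filter.Tendsto (fun k => fun g => ∑ j ∈ fib c g, lam (φ k) j • pn (φ k) j)
        Filter.atTop (nhds (fun g => ∑ j ∈ fib c g, lam0 j • p j)) := by
      rw [tendsto_pi_nhds]
      intro g
      exact hsumlim g
    exact hWclosed.mem_of_tendsto hxlim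
      (Filter.Eventually.of_forall (fun k => hlamW (φ k)))


lemma Bad_subset (ρ : G →* (EuclideanSpace ℝ (Fin d) ≃ₗᵢ[ℝ] EuclideanSpace ℝ (Fin d))) :
    {p : Fin N → EuclideanSpace ℝ (Fin d) |
      ∃ (c : Fin N → G) (x : G → EuclideanSpace ℝ (Fin d))
        (a u : EuclideanSpace ℝ (Fin d)),
        (∀ g : G, x g ∈ convexHull ℝ (p '' {j | c j = g})) ∧
        (∀ g : G, x g = a + ρ g u)} ⊆ ⋃ c : Fin N → G, Bset ρ c := by
  rintro p ⟨c, x, a, u, hx, hau⟩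
  refine Set.mem_iUnion.2 ⟨c, ?_⟩
  have h := fun g => hull_weights p {j | c j = g} (x g) (hx g)
  choose lamg h0 hz hsum hval using h
  have hcong : ∀ g : G, ∑ j ∈ fib c g, lamg (c j) j • p j = ∑ j ∈ fib c g, lamg g j • p j := by
    intro g
    refine Finset.sum_congr rfl (fun j hj => ?_)
    rw [(Finset.mem_filter.1 hj).2]
  have hcong' : ∀ g : G, ∑ j ∈ fib c g, lamg (c j) j = ∑ j ∈ fib c g, lamg g j := by
    intro g
    refine Finset.sum_congr rfl (fun j hj => ?_)
    rw [(Finset.mem_filter.1 hj).2]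
  have hfull : ∀ g : G, ∑ j ∈ fib c g, lamg g j = ∑ j, lamg g j := by
    intro g
    refine Finset.sum_subset (Finset.subset_univ _) (fun j _ hj => ?_)
    apply hz g
    intro hjs
    exact hj (Finset.mem_filter.2 ⟨Finset.mem_univ j, hjs⟩)
  have hfull' : ∀ g : G, ∑ j ∈ fib c g, lamg g j • p j = ∑ j, lamg g j • p j := by
    intro g
    refine Finset.sum_subset (Finset.subset_univ _) (fun j _ hj => ?_)
    rw [hz g j (fun hjs => hj (Finset.mem_filter.2 ⟨Finset.mem_univ j, hjs⟩)), zero_smul]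
  refine ⟨fun j => lamg (c j) j, ?_, ?_, ?_⟩
  · intro j
    refine ⟨h0 (c j) j, ?_⟩
    have h1 := Finset.single_le_sum (f := lamg (c j)) (fun i _ => h0 (c j) i) (Finset.mem_univ j)
    rw [hsum (c j)] at h1
    exact h1
  · intro g
    rw [hcong' g, hfull g, hsum g]
  · refine ⟨(a, u), ?_⟩
    funext g
    show a + ρ g u = ∑ j ∈ fib c g, lamg (c j) j • p j
    rw [hcong g, hfull' g, hval g, hau g]


def Jset (σ : G → Fin N) : Type _ := {j : Fin N // ¬ ∃ g, σ g = j}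

instance (σ : G → Fin N) : Fintype (Jset σ) := Subtype.fintype _

noncomputable abbrev Qspace (d : ℕ) (σ : G → Fin N) : Type _ :=
  (Jset σ → ℝ) × (EuclideanSpace ℝ (Fin d) × (EuclideanSpace ℝ (Fin d) ×
    (Jset σ → EuclideanSpace ℝ (Fin d))))

def FinsJ (c : Fin N → G) (σ : G → Fin N) (g : G) : Finset (Jset σ) :=
  Finset.univ.filter (fun i => c i.1 = g)

noncomputable def denf (c : Fin N → G) (σ : G → Fin N) (g : G) (z : Qspace (G := G) d σ) : ℝ :=
  1 - ∑ i ∈ FinsJ c σ g, z.1 i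

noncomputable def Ssum (c : Fin N → G) (σ : G → Fin N) (g : G) (z : Qspace (G := G) d σ) :
    EuclideanSpace ℝ (Fin d) :=
  ∑ i ∈ FinsJ c σ g, z.1 i • z.2.2.2 i

noncomputable def Fm (ρ : G →* (EuclideanSpace ℝ (Fin d) ≃ₗᵢ[ℝ] EuclideanSpace ℝ (Fin d)))
    (c : Fin N → G) (σ : G → Fin N) (z : Qspace (G := G) d σ) :
    Fin N → EuclideanSpace ℝ (Fin d) :=
  fun j => if hj : ∃ g, σ g = j then
      (denf c σ (c j) z)⁻¹ • (z.2.1 + ρ (c j) z.2.2.1 - Ssum c σ (c j) z)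
    else z.2.2.2 ⟨j, hj⟩

def Us (c : Fin N → G) (σ : G → Fin N) : Set (Qspace (G := G) d σ) :=
  {z | ∀ g, denf c σ g z ≠ 0}

lemma sum_FinsJ {M : Type*} [AddCommMonoid M] (c : Fin N → G) (σ : G → Fin N)
    (hσ : ∀ g, c (σ g) = g) (g : G) (h : Fin N → M) :
    ∑ i ∈ FinsJ c σ g, h i.1 = ∑ j ∈ (fib c g).erase (σ g), h j := by
  refine Finset.sum_bij' (fun (i : Jset σ) (_ : i ∈ FinsJ c σ g) => i.1)
    (fun j hj => ⟨j, ?_⟩) ?_ ?_ ?_ ?_ ?_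
  · rintro ⟨g', rfl⟩
    obtain ⟨hj1, hj2⟩ := Finset.mem_erase.1 hj
    have : g' = g := by
      have := (Finset.mem_filter.1 hj2).2
      rwa [hσ g'] at this
    exact hj1 (by rw [this])
  · intro i hi
    have hcg : c i.1 = g := (Finset.mem_filter.1 hi).2
    refine Finset.mem_erase.2 ⟨?_, Finset.mem_filter.2 ⟨Finset.mem_univ _, hcg⟩⟩
    intro hisg
    exact i.2 ⟨g, by rw [← hisg]⟩
  · intro j hj
    refine Finset.mem_filter.2 ⟨Finset.mem_univ _, ?_⟩
    exact (Finset.mem_filter.1 (Finset.mem_erase.1 hj).2).2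
  · intro i hi
    rfl
  · intro j hj
    rfl
  · intro i hi
    rfl


lemma denf_continuous (c : Fin N → G) (σ : G → Fin N) (g : G) :
    Continuous (fun z : Qspace (G := G) d σ => denf c σ g z) := by
  apply continuous_const.sub
  apply continuous_finset_sum
  intro i _
  exact (continuous_apply i).comp continuous_fst

lemma Us_open (c : Fin N → G) (σ : G → Fin N) : IsOpen (Us (d := d) c σ) := by
  have h : Us (d := d) c σ = ⋂ g : G, (fun z : Qspace (G := G) d σ => denf c σ g z) ⁻¹' {(0:ℝ)}ᶜ := by
    ext z
    simp [Us]
  rw [h]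
  exact isOpen_iInter_of_finite
    (fun g => (isOpen_compl_singleton).preimage (denf_continuous c σ g))

lemma Fm_diffOn (ρ : G →* (EuclideanSpace ℝ (Fin d) ≃ₗᵢ[ℝ] EuclideanSpace ℝ (Fin d)))
    (c : Fin N → G) (σ : G → Fin N) :
    DifferentiableOn ℝ (Fm ρ c σ) (Us c σ) := by
  rw [differentiableOn_pi]
  intro j
  have hmu : ∀ i : Jset σ, Differentiable ℝ (fun z : Qspace (G := G) d σ => z.1 i) :=
    fun i => ((ContinuousLinearMap.proj (R := ℝ) (φ := fun _ : Jset σ => ℝ) i).differentiable).comp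
      differentiable_fst
  have hq : ∀ i : Jset σ, Differentiable ℝ (fun z : Qspace (G := G) d σ => z.2.2.2 i) :=
    fun i => ((ContinuousLinearMap.proj (R := ℝ)
      (φ := fun _ : Jset σ => EuclideanSpace ℝ (Fin d)) i).differentiable).comp
      (differentiable_snd.snd.snd)
  by_cases hj : ∃ g, σ g = j
  · have heq : (fun z : Qspace (G := G) d σ => Fm ρ c σ z j) = fun z =>
        (denf c σ (c j) z)⁻¹ • (z.2.1 + ρ (c j) z.2.2.1 - Ssum c σ (c j) z) := by
      funext z
      simp only [Fm, dif_pos hj]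
    rw [heq]
    have hden : Differentiable ℝ (fun z : Qspace (G := G) d σ => denf c σ (c j) z) := by
      apply (differentiable_const (1:ℝ)).sub
      exact Differentiable.fun_sum (fun i _ => hmu i)
    have hdeninv : DifferentiableOn ℝ
        (fun z : Qspace (G := G) d σ => (denf c σ (c j) z)⁻¹) (Us c σ) :=
      hden.differentiableOn.inv (fun z hz => hz (c j))
    apply hdeninv.smul
    apply DifferentiableOn.sub
    · apply DifferentiableOn.add
      · have ha : Differentiable ℝ (fun z : Qspace (G := G) d σ => z.2.1) :=
          differentiable_snd.fst
        exact ha.differentiableOn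
      · have hb : Differentiable ℝ (fun z : Qspace (G := G) d σ => z.2.2.1) :=
          differentiable_snd.snd.fst
        have hA : Differentiable ℝ (fun z : Qspace (G := G) d σ => ρ (c j) z.2.2.1) :=
          ((ρ (c j)).toLinearIsometry.toContinuousLinearMap.differentiable).comp hb
        exact hA.differentiableOn
    · have hS : Differentiable ℝ (fun z : Qspace (G := G) d σ => Ssum c σ (c j) z) :=
        Differentiable.fun_sum (fun i _ => (hmu i).smul (hq i))
      exact hS.differentiableOn
  · have heq : (fun z : Qspace (G := G) d σ => Fm ρ c σ z j) = fun z => z.2.2.2 ⟨j, hj⟩ := by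
      funext z
      simp only [Fm, dif_neg hj]
    rw [heq]
    exact (hq ⟨j, hj⟩).differentiableOn

lemma Qspace_dim_lt {r : ℕ} (hr : 3 ≤ r) (hcard : Fintype.card G = r) (hd : 1 ≤ d)
    (hN : N < (r - 2) * (d + 1) + 2) (hrN : r ≤ N)
    (σ : G → Fin N) (hinj : Function.Injective σ) :
    finrank ℝ (Qspace (G := G) d σ) < finrank ℝ (Fin N → EuclideanSpace ℝ (Fin d)) := by
  classical
  have hcardJ : Fintype.card (Jset σ) = N - r := by
    have h1 : Fintype.card {j : Fin N // ∃ g, σ g = j} = r := by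
      rw [Fintype.card_congr (Equiv.subtypeEquivRight (fun j => (Set.mem_range).symm))]
      rw [Set.card_range_of_injective hinj, hcard]
    have h2 := Fintype.card_subtype_compl (fun j : Fin N => ∃ g, σ g = j)
    rw [h1, Fintype.card_fin] at h2
    exact h2
  have hE : finrank ℝ (EuclideanSpace ℝ (Fin d)) = d := finrank_euclideanSpace_fin
  have hpiE : ∀ (ι : Type) [Fintype ι], finrank ℝ (ι → EuclideanSpace ℝ (Fin d))
      = Fintype.card ι * d := by
    intro ι _
    rw [Module.finrank_pi_fintype, Finset.sum_congr rfl (fun i _ => hE), Finset.sum_const,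
      smul_eq_mul, Finset.card_univ]
  have hQ : finrank ℝ (Qspace (G := G) d σ) = (N - r) + (d + (d + (N - r) * d)) := by
    rw [finrank_prod, finrank_prod, finrank_prod, Module.finrank_pi, hE, hcardJ]
    rw [show finrank ℝ (Jset σ → EuclideanSpace ℝ (Fin d)) = (N - r) * d by
      rw [hpiE (Jset σ), hcardJ]]
  have hP : finrank ℝ (Fin N → EuclideanSpace ℝ (Fin d)) = N * d := by
    rw [hpiE (Fin N), Fintype.card_fin]
  rw [hQ, hP]
  obtain ⟨r2, rfl⟩ : ∃ r2, r = r2 + 2 := ⟨r - 2, by omega⟩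
  have h2 : (r2 + 2) - 2 = r2 := by omega
  rw [h2] at hN
  have h3 : r2 * (d + 1) = r2 * d + r2 := by ring
  rw [h3] at hN
  obtain ⟨t, rfl⟩ : ∃ t, N = t + (r2 + 2) := ⟨N - (r2 + 2), by omega⟩
  have h4 : t + (r2 + 2) - (r2 + 2) = t := by omega
  rw [h4]
  have h5 : (t + (r2 + 2)) * d = t * d + r2 * d + 2 * d := by ring
  rw [h5]
  set A := t * d with hA
  set B := r2 * d with hB
  omega

lemma Bset_null {r : ℕ} (hr : 3 ≤ r) (hcard : Fintype.card G = r) (hd : 1 ≤ d)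
    (hNpos : 0 < N) (hN : N < (r - 2) * (d + 1) + 2)
    (ρ : G →* (EuclideanSpace ℝ (Fin d) ≃ₗᵢ[ℝ] EuclideanSpace ℝ (Fin d)))
    (c : Fin N → G) :
    volume (Bset ρ c) = 0 := by
  classical
  haveI : (volume : Measure (Fin N → EuclideanSpace ℝ (Fin d))).IsAddHaarMeasure := by constructor
  by_cases hsurj : Function.Surjective c
  swap
  · have hempty : Bset (N := N) ρ c = ∅ := by
      rw [Set.eq_empty_iff_forall_notMem]
      rintro p ⟨lam, h01, hsum, hW⟩
      rw [Function.Surjective] at hsurj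
      push_neg at hsurj
      obtain ⟨g, hg⟩ := hsurj
      have hfib : fib (N := N) c g = ∅ := by
        rw [Finset.eq_empty_iff_forall_notMem]
        intro j hj
        exact hg j (Finset.mem_filter.1 hj).2
      have h1 := hsum g
      rw [hfib] at h1
      simpa using h1
    rw [hempty]
    exact measure_empty
  · have hrN : r ≤ N := by
      rw [← hcard, ← Fintype.card_fin N]
      exact Fintype.card_le_of_surjective c hsurj
    have hNpos' : (0:ℝ) < N := by exact_mod_cast hNpos
    have hcover : Bset ρ c ⊆ ⋃ (σ : G → Fin N), ⋃ (_ : ∀ g, c (σ g) = g),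
        Fm ρ c σ '' Us c σ := by
      rintro p ⟨lam, h01, hsum, ⟨⟨a, u⟩, hau⟩⟩
      have hau' : ∀ g, a + ρ g u = ∑ j ∈ fib c g, lam j • p j := fun g => congrFun hau g
      have hpig : ∀ g : G, ∃ j ∈ fib c g, 1 / (N:ℝ) ≤ lam j := by
        intro g
        have hne : (fib c g).Nonempty := by
          rcases Finset.eq_empty_or_nonempty (fib c g) with h | h
          · exfalso
            have h1 := hsum g
            rw [h] at h1
            simpa using h1
          · exact h
        refine Finset.exists_le_of_sum_le hne ?_
        rw [hsum g, Finset.sum_const, nsmul_eq_mul, mul_one_div, div_le_one hNpos']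
        have h1 := Finset.card_le_card (Finset.subset_univ (fib c g))
        rw [Finset.card_univ, Fintype.card_fin] at h1
        exact_mod_cast h1
      choose σ hσfib hσlam using hpig
      have hσ : ∀ g, c (σ g) = g := fun g => (Finset.mem_filter.1 (hσfib g)).2
      have hlampos : ∀ g, (0:ℝ) < lam (σ g) := fun g =>
        lt_of_lt_of_le (by positivity) (hσlam g)
      refine Set.mem_iUnion.2 ⟨σ, Set.mem_iUnion.2 ⟨hσ, ?_⟩⟩
      set z0 : Qspace (G := G) d σ :=
        (fun i => lam i.1, (a, (u, fun i => p i.1))) with hz0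
      have hden : ∀ g, denf c σ g z0 = lam (σ g) := by
        intro g
        rw [denf]
        have h1 : ∑ i ∈ FinsJ c σ g, z0.1 i = ∑ j ∈ (fib c g).erase (σ g), lam j :=
          sum_FinsJ c σ hσ g lam
        rw [h1]
        have h2 := Finset.add_sum_erase (fib c g) lam (hσfib g)
        rw [hsum g] at h2
        linarith
      have hSs : ∀ g, Ssum c σ g z0 = ∑ j ∈ (fib c g).erase (σ g), lam j • p j := by
        intro g
        rw [Ssum]
        exact sum_FinsJ c σ hσ g (fun j => lam j • p j)
      refine ⟨z0, ?_, ?_⟩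
      · intro g
        rw [hden g]
        exact ne_of_gt (hlampos g)
      · funext j
        by_cases hj : ∃ g, σ g = j
        · obtain ⟨g, rfl⟩ := hj
          show (if hj : ∃ g', σ g' = σ g then
              (denf c σ (c (σ g)) z0)⁻¹ • (z0.2.1 + ρ (c (σ g)) z0.2.2.1 - Ssum c σ (c (σ g)) z0)
            else z0.2.2.2 ⟨σ g, hj⟩) = p (σ g)
          rw [dif_pos ⟨g, rfl⟩, hσ g]
          have h6 : ∑ j ∈ fib c g, lam j • p j - ∑ j ∈ (fib c g).erase (σ g), lam j • p j
              = lam (σ g) • p (σ g) := by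
            have h7 := Finset.add_sum_erase (fib c g) (fun j => lam j • p j) (hσfib g)
            rw [← h7]
            simp
          show (denf c σ g z0)⁻¹ • (a + ρ g u - Ssum c σ g z0) = p (σ g)
          rw [hden g, hSs g, hau' g, h6, smul_smul,
            inv_mul_cancel₀ (ne_of_gt (hlampos g)), one_smul]
        · show (if hj' : ∃ g', σ g' = j then
              (denf c σ (c j) z0)⁻¹ • (z0.2.1 + ρ (c j) z0.2.2.1 - Ssum c σ (c j) z0)
            else z0.2.2.2 ⟨j, hj'⟩) = p j
          rw [dif_neg hj]
    refine measure_mono_null hcover ?_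
    refine measure_iUnion_null (fun σ => measure_iUnion_null (fun hσ => ?_))
    have hinj : Function.Injective σ := fun g g' h => by rw [← hσ g, ← hσ g', h]
    exact null_image_of_lowdim volume (Qspace_dim_lt hr hcard hd hN hrN σ hinj)
      (Fm ρ c σ) (Us c σ) (Us_open c σ) (Fm_diffOn ρ c σ)

end aux

theorem orbit_partition_optimality
    (G : Type*) [Group G] [Fintype G] (r d : ℕ) (hr : 3 ≤ r)
    (hcard : Fintype.card G = r) (hd : 1 ≤ d)
    (ρ : G →* (EuclideanSpace ℝ (Fin d) ≃ₗᵢ[ℝ] EuclideanSpace ℝ (Fin d)))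
    (hnotriv : ∀ v : EuclideanSpace ℝ (Fin d), (∀ g : G, ρ g v = v) → v = 0)
    (N : ℕ) (hNpos : 0 < N) (hN : N < (r - 2) * (d + 1) + 2) :
    ∃ S : Set (Fin N → EuclideanSpace ℝ (Fin d)),
      IsOpen S ∧ Dense S ∧ volume Sᶜ = 0 ∧
      ∀ p ∈ S,
        ¬ ∃ (c : Fin N → G) (x : G → EuclideanSpace ℝ (Fin d))
            (a u : EuclideanSpace ℝ (Fin d)),
            (∀ g : G, x g ∈ convexHull ℝ (p '' {j | c j = g})) ∧
            (∀ g : G, x g = a + ρ g u) := by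
  classical
  haveI : (volume : Measure (Fin N → EuclideanSpace ℝ (Fin d))).IsAddHaarMeasure := by constructor
  set C : Set (Fin N → EuclideanSpace ℝ (Fin d)) := ⋃ c : Fin N → G, Bset ρ c with hC
  have hCclosed : IsClosed C := isClosed_iUnion_of_finite (fun c => Bset_closed ρ c)
  have hCnull : volume C = 0 :=
    measure_iUnion_null (fun c => Bset_null hr hcard hd hNpos hN ρ c)
  refine ⟨Cᶜ, hCclosed.isOpen_compl, ?_, ?_, ?_⟩
  · have hint : interior C = ∅ := by
      by_contra h
      obtain ⟨x, hx⟩ := Set.nonempty_iff_ne_empty.2 h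
      have hpos : 0 < volume (interior C) :=
        (isOpen_interior).measure_pos volume ⟨x, hx⟩
      have hle : volume (interior C) ≤ volume C := measure_mono interior_subset
      rw [hCnull] at hle
      exact absurd (lt_of_lt_of_le hpos hle) (lt_irrefl 0)
    rwa [← interior_eq_empty_iff_dense_compl]
  · rw [compl_compl]
    exact hCnull
  · intro p hp hbad
    exact hp (Bad_subset ρ hbad)
end

section
/- Let r ≥ 3 and let N be a positive integer with N < 3r-4. Then there exists a dense open subset S of ℂ^N whose complement has Lebesgue measure zero such that for every tuple (p_1,…,p_N) ∈ S there do NOT exist a function c : {1,…,N} → ℤ/rℤ, points x_k ∈ convexHull{p_j : c(j) = k} for each k ∈ ℤ/rℤ, and complex numbers a, u with u ≠ 0 such that x_k = a + u·e^{2πik/r} for all k; that is, a generic set of fewer than 3r-4 points in the plane admits no partition into r subsets with one point from each convex hull forming the vertices of a regular r-gon. -/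
open MeasureTheory Complex

noncomputable section PolyAux

namespace PolyAux

open Module Set Finset

/-- vertex direction of the regular polygon -/
def zet (r : ℕ) (k : ZMod r) : ℂ := Complex.exp (2 * Real.pi * Complex.I * k.val / r)

/-- the (complex) 2-dimensional space of "regular polygon configurations" (incl. degenerate). -/
def Vsub (r : ℕ) : Submodule ℂ (ZMod r → ℂ) :=
  Submodule.span ℂ {(fun _ => 1 : ZMod r → ℂ), zet r}

/-- tuples `p` that admit weights `w` (per-class convex weights) whose weighted class averages
form a (possibly degenerate) regular polygon. -/
def badSet (r N : ℕ) (c : Fin N → ZMod r) : Set (Fin N → ℂ) :=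
  Prod.snd '' {z : (Fin N → Set.Icc (0:ℝ) 1) × (Fin N → ℂ) |
    (∀ k : ZMod r, (∑ j, if c j = k then ((z.1 j : ℝ)) else 0) = 1) ∧
    (fun k => ∑ j, if c j = k then ((z.1 j : ℝ) : ℂ) * z.2 j else 0) ∈ Vsub r}

variable {r N : ℕ}

/-- the subtype of non-representative indices -/
abbrev T (c : Fin N → ZMod r) (σ : ZMod r → Fin N) := {j : Fin N // σ (c j) ≠ j}

/-- the parameter space -/
abbrev D (c : Fin N → ZMod r) (σ : ZMod r → Fin N) :=
  (T c σ → ℝ) × (T c σ → ℂ) × ℂ × ℂ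

def polyMap (r : ℕ) (c : Fin N → ZMod r) (σ : ZMod r → Fin N) (z : D c σ) : Fin N → ℂ :=
  fun j =>
    if h : σ (c j) = j then
      (z.2.2.1 + z.2.2.2 * zet r (c j)
        - ∑ i : T c σ, if c i.1 = c j then ((z.1 i : ℝ) : ℂ) * z.2.1 i else 0)
      / (1 - ∑ i : T c σ, if c i.1 = c j then ((z.1 i : ℝ) : ℂ) else 0)
    else z.2.1 ⟨j, h⟩

def polyDom (c : Fin N → ZMod r) (σ : ZMod r → Fin N) : Set (D c σ) :=
  {z | ∀ k : ZMod r, (1 - ∑ i : T c σ, if c i.1 = k then ((z.1 i : ℝ) : ℂ) else 0) ≠ 0}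

lemma isOpen_polyDom [NeZero r] (c : Fin N → ZMod r) (σ : ZMod r → Fin N) :
    IsOpen (polyDom c σ) := by
  classical
  have hrw : polyDom c σ = ⋂ k : ZMod r,
      {z : D c σ | (1 - ∑ i : T c σ, if c i.1 = k then ((z.1 i : ℝ) : ℂ) else 0) ≠ 0} := by
    ext z; simp [polyDom, Set.mem_iInter]
  rw [hrw]
  refine isOpen_iInter_of_finite fun k => ?_
  have hg : Continuous (fun z : D c σ =>
      (1 - ∑ i : T c σ, if c i.1 = k then ((z.1 i : ℝ) : ℂ) else 0)) := by
    refine continuous_const.sub (continuous_finset_sum _ fun i _ => ?_)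
    by_cases h : c i.1 = k
    · simp only [if_pos h]
      exact Complex.continuous_ofReal.comp ((continuous_apply i).comp continuous_fst)
    · simp only [if_neg h]; exact continuous_const
  exact isOpen_compl_singleton.preimage hg

lemma differentiableOn_polyMap (c : Fin N → ZMod r) (σ : ZMod r → Fin N) :
    DifferentiableOn ℝ (polyMap r c σ) (polyDom c σ) := by
  classical
  rw [differentiableOn_pi]
  intro j
  have hw : ∀ i : T c σ, Differentiable ℝ (fun z : D c σ => ((z.1 i : ℝ) : ℂ)) := fun i =>
    Complex.ofRealCLM.differentiable.comp
      ((ContinuousLinearMap.proj i : (T c σ → ℝ) →L[ℝ] ℝ).differentiable.comp differentiable_fst)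
  have hq : ∀ i : T c σ, Differentiable ℝ (fun z : D c σ => z.2.1 i) := fun i =>
    (ContinuousLinearMap.proj i : (T c σ → ℂ) →L[ℝ] ℂ).differentiable.comp
      (differentiable_snd.fst)
  have ha : Differentiable ℝ (fun z : D c σ => z.2.2.1) :=
    differentiable_fst.comp (differentiable_snd.comp differentiable_snd)
  have hb : Differentiable ℝ (fun z : D c σ => z.2.2.2) :=
    differentiable_snd.comp (differentiable_snd.comp differentiable_snd)
  by_cases h : σ (c j) = j
  · have hrw : ∀ z : D c σ, polyMap r c σ z j =
        (z.2.2.1 + z.2.2.2 * zet r (c j)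
          - ∑ i : T c σ, if c i.1 = c j then ((z.1 i : ℝ) : ℂ) * z.2.1 i else 0)
        / (1 - ∑ i : T c σ, if c i.1 = c j then ((z.1 i : ℝ) : ℂ) else 0) := fun z => by
      simp only [polyMap, dif_pos h]
    simp only [div_eq_mul_inv] at hrw
    refine DifferentiableOn.congr ?_ (fun z _ => hrw z)
    have hnum : Differentiable ℝ (fun z : D c σ => z.2.2.1 + z.2.2.2 * zet r (c j)
        - ∑ i : T c σ, if c i.1 = c j then ((z.1 i : ℝ) : ℂ) * z.2.1 i else 0) := by
      refine Differentiable.sub (ha.add (hb.mul_const _)) ?_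
      refine Differentiable.fun_sum fun i _ => ?_
      by_cases hci : c i.1 = c j
      · simp only [if_pos hci]; exact (hw i).mul (hq i)
      · simp only [if_neg hci]; exact differentiable_const 0
    have hden : Differentiable ℝ (fun z : D c σ =>
        1 - ∑ i : T c σ, if c i.1 = c j then ((z.1 i : ℝ) : ℂ) else 0) := by
      refine Differentiable.const_sub ?_ _
      refine Differentiable.fun_sum fun i _ => ?_
      by_cases hci : c i.1 = c j
      · simp only [if_pos hci]; exact hw i
      · simp only [if_neg hci]; exact differentiable_const 0
    exact hnum.differentiableOn.mul (hden.differentiableOn.inv (fun z hz => hz (c j)))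
  · have hrw : ∀ z : D c σ, polyMap r c σ z j = z.2.1 ⟨j, h⟩ := fun z => by
      simp only [polyMap, dif_neg h]
    exact DifferentiableOn.congr (hq ⟨j, h⟩).differentiableOn (fun z _ => hrw z)

lemma sum_split (c : Fin N → ZMod r) (σ : ZMod r → Fin N) (hσ : ∀ k, c (σ k) = k)
    (f : Fin N → ℂ) (k : ZMod r) :
    (∑ j : Fin N, if c j = k then f j else 0)
      = (∑ i : T c σ, if c i.1 = k then f i.1 else 0) + f (σ k) := by
  classical
  have h1 : (∑ j : Fin N, if c j = k then f j else 0)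
      = (∑ j ∈ Finset.univ.filter (fun j => σ (c j) ≠ j), if c j = k then f j else 0)
        + (∑ j ∈ Finset.univ.filter (fun j => ¬ σ (c j) ≠ j), if c j = k then f j else 0) :=
    (Finset.sum_filter_add_sum_filter_not _ _ _).symm
  rw [h1]
  congr 1
  · exact Finset.sum_subtype _ (fun x => by simp [Finset.mem_filter]) _
  · rw [Finset.sum_eq_single_of_mem (σ k)]
    · rw [if_pos (hσ k)]
    · simp [hσ k]
    · intro j hj hne
      simp only [Finset.mem_filter, Finset.mem_univ, true_and, not_not] at hj
      rw [if_neg]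
      intro hc
      apply hne
      rw [← hj, hc]

lemma badSet_subset_cover (c : Fin N → ZMod r) :
    badSet r N c ⊆
      ⋃ σ : {σ : ZMod r → Fin N // ∀ k, c (σ k) = k},
        polyMap r c σ.1 '' polyDom c σ.1 := by
  classical
  rintro p ⟨z, ⟨hw, hx⟩, rfl⟩
  obtain ⟨a, u, hau⟩ := Submodule.mem_span_pair.1 hx
  have hweq : ∀ k, (∑ j, if c j = k then ((z.1 j : ℝ) : ℂ) * z.2 j else 0) = a + u * zet r k := by
    intro k
    have := congrFun hau k
    simp only [Pi.add_apply, Pi.smul_apply, smul_eq_mul, mul_one] at this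
    exact this.symm
  have hsig : ∀ k, ∃ j, c j = k ∧ ((z.1 j : ℝ)) ≠ 0 := by
    intro k
    by_contra hcon
    push_neg at hcon
    have hz : (∑ j, if c j = k then ((z.1 j : ℝ)) else 0) = 0 :=
      Finset.sum_eq_zero fun j _ => by
        by_cases hc : c j = k
        · simp [hc, hcon j hc]
        · simp [hc]
    rw [hw k] at hz
    exact one_ne_zero hz
  choose σ hσ1 hσ2 using hsig
  refine Set.mem_iUnion.2 ⟨⟨σ, hσ1⟩, ?_⟩
  refine ⟨(fun i => (z.1 i.1 : ℝ), fun i => z.2 i.1, a, u), ?_, ?_⟩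
  · -- in the domain
    intro k
    have htot : (∑ j, if c j = k then ((z.1 j : ℝ) : ℂ) else 0) = 1 := by
      have hcast : ((∑ j, if c j = k then ((z.1 j : ℝ)) else 0 : ℝ) : ℂ)
          = ∑ j, if c j = k then ((z.1 j : ℝ) : ℂ) else 0 := by
        push_cast [apply_ite (fun x : ℝ => (x : ℂ))]
        rfl
      rw [← hcast, hw k, Complex.ofReal_one]
    have hs := sum_split c σ hσ1 (fun j => ((z.1 j : ℝ) : ℂ)) k
    rw [htot] at hs
    have hsub : (∑ i : T c σ, if c i.1 = k then ((z.1 i.1 : ℝ) : ℂ) else 0)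
        = 1 - ((z.1 (σ k) : ℝ) : ℂ) := eq_sub_of_add_eq hs.symm
    rw [hsub]
    simpa using Complex.ofReal_ne_zero.2 (hσ2 k)
  · -- maps to p
    funext j
    by_cases h : σ (c j) = j
    · have hs1 := sum_split c σ hσ1 (fun j' => ((z.1 j' : ℝ) : ℂ)) (c j)
      have hs2 := sum_split c σ hσ1 (fun j' => ((z.1 j' : ℝ) : ℂ) * z.2 j') (c j)
      have htot : (∑ j', if c j' = c j then ((z.1 j' : ℝ) : ℂ) else 0) = 1 := by
        have hcast : ((∑ j', if c j' = c j then ((z.1 j' : ℝ)) else 0 : ℝ) : ℂ)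
            = ∑ j', if c j' = c j then ((z.1 j' : ℝ) : ℂ) else 0 := by
          push_cast [apply_ite (fun x : ℝ => (x : ℂ))]
          rfl
        rw [← hcast, hw (c j), Complex.ofReal_one]
      rw [htot] at hs1
      rw [hweq (c j)] at hs2
      have hden : (1 - ∑ i : T c σ, if c i.1 = c j then ((z.1 i.1 : ℝ) : ℂ) else 0)
          = ((z.1 (σ (c j)) : ℝ) : ℂ) := by
        have := eq_sub_of_add_eq hs1.symm
        rw [this]
        ring
      have hnum : (a + u * zet r (c j)
          - ∑ i : T c σ, if c i.1 = c j then ((z.1 i.1 : ℝ) : ℂ) * z.2 i.1 else 0)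
          = ((z.1 (σ (c j)) : ℝ) : ℂ) * z.2 (σ (c j)) := by
        have := eq_sub_of_add_eq hs2.symm
        rw [this]
        ring
      simp only [polyMap, dif_pos h]
      have hnz : ((z.1 j : ℝ) : ℂ) ≠ 0 := by
        rw [← h]; exact Complex.ofReal_ne_zero.2 (hσ2 (c j))
      rw [hden, hnum, h]
      exact mul_div_cancel_left₀ _ hnz
    · simp only [polyMap, dif_neg h]

lemma det_eq_zero_of_apply_eq_zero {E : Type*} [NormedAddCommGroup E] [NormedSpace ℝ E]
    [FiniteDimensional ℝ E] (f : E →L[ℝ] E) {v : E} (hv : v ≠ 0) (hfv : f v = 0) :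
    f.det = 0 := by
  classical
  have : LinearMap.det (f : E →ₗ[ℝ] E) = 0 := by
    let b := Module.finBasis ℝ E
    rw [← LinearMap.det_toMatrix b, ← Matrix.exists_mulVec_eq_zero_iff]
    refine ⟨b.repr v, fun h => hv (by simpa using (b.repr.map_eq_zero_iff).1 (by
      ext i; exact congrFun h i)), ?_⟩
    rw [LinearMap.toMatrix_mulVec_repr]
    simp [hfv]
  exact this


lemma image_null_of_lt_finrank
    {D' E : Type*} [NormedAddCommGroup D'] [NormedSpace ℝ D'] [FiniteDimensional ℝ D']
    [NormedAddCommGroup E] [NormedSpace ℝ E] [FiniteDimensional ℝ E]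
    [MeasurableSpace E] [BorelSpace E]
    (μ : Measure E) [μ.IsAddHaarMeasure]
    (hlt : finrank ℝ D' < finrank ℝ E)
    {F : D' → E} {U : Set D'} (hU : IsOpen U) (hF : DifferentiableOn ℝ F U) :
    μ (F '' U) = 0 := by
  classical
  set d := finrank ℝ D' with hd
  set n := finrank ℝ E with hn
  let bD := Module.finBasis ℝ D'
  let bE := Module.finBasis ℝ E
  let π₀ : E →ₗ[ℝ] D' :=
    (bD.equivFun.symm.toLinearMap.comp
      (LinearMap.funLeft ℝ ℝ (Fin.castLE hlt.le))).comp bE.equivFun.toLinearMap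
  have hπ₀surj : Function.Surjective π₀ := by
    intro y
    obtain ⟨t, ht⟩ := LinearMap.funLeft_surjective_of_injective ℝ ℝ (Fin.castLE hlt.le)
      (Fin.castLE_injective hlt.le) (bD.equivFun y)
    refine ⟨bE.equivFun.symm t, ?_⟩
    simp only [π₀, LinearMap.comp_apply, LinearEquiv.coe_toLinearMap,
      LinearEquiv.apply_symm_apply, ht, LinearEquiv.symm_apply_apply]
  let π : E →L[ℝ] D' := π₀.toContinuousLinearMap
  have hπsurj : Function.Surjective π := hπ₀surj
  -- a nonzero kernel vector
  let v : E := bE.equivFun.symm (Pi.single ⟨d, hlt⟩ 1)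
  have hv0 : v ≠ 0 := by
    simp only [v, ne_eq, EmbeddingLike.map_eq_zero_iff]
    intro h
    have := congrFun h ⟨d, hlt⟩
    simp [Pi.single_apply] at this
  have hπv : π v = 0 := by
    show π₀ v = 0
    simp only [π₀, v, LinearMap.comp_apply, LinearEquiv.coe_toLinearMap,
      LinearEquiv.apply_symm_apply]
    have : LinearMap.funLeft ℝ ℝ (Fin.castLE hlt.le) (Pi.single ⟨d, hlt⟩ 1) = 0 := by
      ext i
      simp only [LinearMap.funLeft_apply, Pi.single_apply, Pi.zero_apply]
      rw [if_neg]
      intro h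
      have := congrArg Fin.val h
      simp [Fin.castLE] at this
      omega
    rw [this]
    simp
  set s : Set E := π ⁻¹' U with hs
  have himg : F '' U = (F ∘ π) '' s := by
    rw [Set.image_comp, hs, Set.image_preimage_eq U hπsurj]
  rw [himg]
  apply addHaar_image_eq_zero_of_det_fderivWithin_eq_zero μ
    (f' := fun x => (fderiv ℝ F (π x)).comp π)
  · intro x hx
    have h1 : HasFDerivAt F (fderiv ℝ F (π x)) (π x) :=
      (hF.differentiableAt (hU.mem_nhds hx)).hasFDerivAt
    exact (h1.comp x (π.hasFDerivAt)).hasFDerivWithinAt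
  · intro x _
    apply det_eq_zero_of_apply_eq_zero _ hv0
    simp [hπv]


lemma finrank_D_lt [NeZero r] (hr : 3 ≤ r) (hN : N < 3 * r - 4)
    (c : Fin N → ZMod r) (σ : ZMod r → Fin N) (hσ : ∀ k, c (σ k) = k) :
    finrank ℝ (D c σ) < finrank ℝ (Fin N → ℂ) := by
  classical
  have hinj : Function.Injective σ := fun k k' h => by rw [← hσ k, ← hσ k', h]
  have hrN : r ≤ N := by
    have := Fintype.card_le_of_injective σ hinj
    simpa [ZMod.card] using this
  have hcardfix : Fintype.card {j : Fin N // σ (c j) = j} = r := by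
    have e : ZMod r ≃ {j : Fin N // σ (c j) = j} :=
      { toFun := fun k => ⟨σ k, by rw [hσ]⟩
        invFun := fun j => c j.1
        left_inv := fun k => hσ k
        right_inv := fun j => Subtype.ext j.2 }
    rw [← Fintype.card_congr e, ZMod.card]
  have hcardT : Fintype.card (T c σ) = N - r := by
    have := Fintype.card_subtype_compl (fun j : Fin N => σ (c j) = j)
    rw [hcardfix, Fintype.card_fin] at this
    exact this
  have h1 : finrank ℝ (D c σ) = (N - r) + ((N - r) * 2 + (2 + 2)) := by
    rw [finrank_prod, finrank_prod, finrank_prod]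
    rw [finrank_pi ℝ]
    rw [finrank_pi_fintype ℝ]
    simp only [Complex.finrank_real_complex, Finset.sum_const, smul_eq_mul, Finset.card_univ, hcardT]
  have h2 : finrank ℝ (Fin N → ℂ) = N * 2 := by
    rw [finrank_pi_fintype ℝ]
    simp [Complex.finrank_real_complex]
  rw [h1, h2]
  omega

lemma badSet_null (hr : 3 ≤ r) (hN : N < 3 * r - 4) (c : Fin N → ZMod r) :
    volume (badSet r N c) = 0 := by
  haveI : NeZero r := ⟨by omega⟩
  apply measure_mono_null (badSet_subset_cover c)
  apply measure_iUnion_null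
  intro σ
  exact image_null_of_lt_finrank volume (finrank_D_lt hr hN c σ.1 σ.2)
    (isOpen_polyDom c σ.1) (differentiableOn_polyMap c σ.1)

lemma badSet_closed (hr : 3 ≤ r) (c : Fin N → ZMod r) :
    IsClosed (badSet r N c) := by
  classical
  apply isClosedMap_snd_of_compactSpace
  have hrw : {z : (Fin N → Set.Icc (0:ℝ) 1) × (Fin N → ℂ) |
      (∀ k : ZMod r, (∑ j, if c j = k then ((z.1 j : ℝ)) else 0) = 1) ∧
      (fun k => ∑ j, if c j = k then ((z.1 j : ℝ) : ℂ) * z.2 j else 0) ∈ Vsub r}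
      = (⋂ k : ZMod r, {z : (Fin N → Set.Icc (0:ℝ) 1) × (Fin N → ℂ) |
          (∑ j, if c j = k then ((z.1 j : ℝ)) else 0) = 1})
        ∩ ((fun z : (Fin N → Set.Icc (0:ℝ) 1) × (Fin N → ℂ) =>
            (fun k => ∑ j, if c j = k then ((z.1 j : ℝ) : ℂ) * z.2 j else 0)) ⁻¹'
            (Vsub r : Set (ZMod r → ℂ))) := by
    ext z
    simp only [Set.mem_setOf_eq, Set.mem_inter_iff, Set.mem_iInter, Set.mem_preimage,
      SetLike.mem_coe]
  rw [hrw]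
  refine IsClosed.inter (isClosed_iInter fun k => ?_) ?_
  · apply isClosed_eq ?_ continuous_const
    refine continuous_finset_sum _ fun j _ => ?_
    by_cases hc : c j = k
    · simp only [if_pos hc]
      exact continuous_subtype_val.comp ((continuous_apply j).comp continuous_fst)
    · simp only [if_neg hc]; exact continuous_const
  · haveI : FiniteDimensional ℂ (Vsub r) := by
      apply FiniteDimensional.span_of_finite
      exact (Set.finite_singleton _).insert _
    apply IsClosed.preimage ?_ (Submodule.closed_of_finiteDimensional _)
    refine continuous_pi fun k => continuous_finset_sum _ fun j _ => ?_
    by_cases hc : c j = k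
    · simp only [if_pos hc]
      exact ((Complex.continuous_ofReal.comp
        (continuous_subtype_val.comp ((continuous_apply j).comp continuous_fst))).mul
        ((continuous_apply j).comp continuous_snd))
    · simp only [if_neg hc]; exact continuous_const

lemma exists_index_weights (hNpos : 0 < N) (c : Fin N → ZMod r) (p : Fin N → ℂ) (k : ZMod r)
    {x : ℂ} (hx : x ∈ convexHull ℝ (p '' {j | c j = k})) :
    ∃ w : Fin N → ℝ, (∀ j, 0 ≤ w j ∧ w j ≤ 1) ∧ (∀ j, c j ≠ k → w j = 0) ∧
      (∑ j, if c j = k then w j else 0) = 1 ∧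
      (∑ j, if c j = k then (w j : ℂ) * p j else 0) = x := by
  classical
  set s : Finset (Fin N) := Finset.univ.filter (fun j => c j = k) with hs
  have himg : p '' {j | c j = k} = ↑(s.image p) := by
    ext y
    simp [hs, Set.mem_image, Finset.mem_image, Finset.mem_filter]
  rw [himg] at hx
  obtain ⟨v, hv0, hv1, hvx⟩ := Finset.mem_convexHull'.1 hx
  let rep : ℂ → Fin N := fun y => if h : ∃ j, j ∈ s ∧ p j = y then h.choose else ⟨0, hNpos⟩
  have hrep_mem : ∀ y ∈ s.image p, rep y ∈ s ∧ p (rep y) = y := by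
    intro y hy
    obtain ⟨j, hj, hpj⟩ := Finset.mem_image.1 hy
    have h : ∃ j, j ∈ s ∧ p j = y := ⟨j, hj, hpj⟩
    simp only [rep, dif_pos h]
    exact ⟨h.choose_spec.1, h.choose_spec.2⟩
  set w : Fin N → ℝ := fun j => ∑ y ∈ (s.image p).filter (fun y => rep y = j), v y with hwdef
  have hw0 : ∀ j, 0 ≤ w j := fun j =>
    Finset.sum_nonneg fun y hy => hv0 y (Finset.mem_of_mem_filter _ hy)
  have hwtot : ∑ j, w j = 1 := by
    rw [hwdef]
    rw [Finset.sum_fiberwise_of_maps_to (fun y _ => Finset.mem_univ (rep y)) v]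
    exact hv1
  have hw1 : ∀ j, w j ≤ 1 := by
    intro j
    calc w j ≤ ∑ y ∈ s.image p, v y :=
          Finset.sum_le_sum_of_subset_of_nonneg (Finset.filter_subset _ _)
            (fun y hy _ => hv0 y hy)
      _ = 1 := hv1
  have hsupp : ∀ j, c j ≠ k → w j = 0 := by
    intro j hj
    apply Finset.sum_eq_zero
    intro y hy
    exfalso
    have h1 := (hrep_mem y (Finset.mem_of_mem_filter _ hy)).1
    have h2 : rep y = j := (Finset.mem_filter.1 hy).2
    rw [h2] at h1
    rw [hs, Finset.mem_filter] at h1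
    exact hj h1.2
  have hvec : (∑ j, (w j : ℂ) * p j) = x := by
    have h1 : ∀ j : Fin N, (w j : ℂ) * p j
        = ∑ y ∈ (s.image p).filter (fun y => rep y = j), (v y : ℂ) * y := by
      intro j
      have hcast : ((w j : ℝ) : ℂ)
          = ∑ y ∈ (s.image p).filter (fun y => rep y = j), (v y : ℂ) := by
        rw [hwdef]; push_cast; rfl
      rw [hcast, Finset.sum_mul]
      refine Finset.sum_congr rfl fun y hy => ?_
      have h2 := (hrep_mem y (Finset.mem_of_mem_filter _ hy)).2
      have h3 : rep y = j := (Finset.mem_filter.1 hy).2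
      rw [← h3, h2]
    calc (∑ j, (w j : ℂ) * p j)
        = ∑ j, ∑ y ∈ (s.image p).filter (fun y => rep y = j), (v y : ℂ) * y :=
          Finset.sum_congr rfl fun j _ => h1 j
      _ = ∑ y ∈ s.image p, (v y : ℂ) * y :=
          Finset.sum_fiberwise_of_maps_to (fun y _ => Finset.mem_univ (rep y)) _
      _ = x := by
          rw [← hvx]
          exact Finset.sum_congr rfl fun y _ => Complex.real_smul.symm
  have hsum1 : (∑ j, if c j = k then w j else 0) = ∑ j, w j := by
    refine Finset.sum_congr rfl fun j _ => ?_
    by_cases hc : c j = k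
    · simp [hc]
    · simp [hc, hsupp j hc]
  have hsum2 : (∑ j, if c j = k then (w j : ℂ) * p j else 0) = ∑ j, (w j : ℂ) * p j := by
    refine Finset.sum_congr rfl fun j _ => ?_
    by_cases hc : c j = k
    · simp [hc]
    · simp [hc, hsupp j hc]
  exact ⟨w, fun j => ⟨hw0 j, hw1 j⟩, hsupp, by rw [hsum1, hwtot], by rw [hsum2, hvec]⟩

lemma mem_badSet (hNpos : 0 < N) (c : Fin N → ZMod r) (p : Fin N → ℂ)
    (x : ZMod r → ℂ) (a u : ℂ)
    (hhull : ∀ k : ZMod r, x k ∈ convexHull ℝ (p '' {j | c j = k}))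
    (hpoly : ∀ k : ZMod r, x k = a + u * zet r k) :
    p ∈ badSet r N c := by
  classical
  choose wk hwk01 hwksupp hwksum hwkvec using fun k =>
    exists_index_weights hNpos c p k (hhull k)
  let W : Fin N → Set.Icc (0:ℝ) 1 := fun j => ⟨wk (c j) j, (hwk01 (c j) j).1, (hwk01 (c j) j).2⟩
  refine ⟨(W, p), ⟨?_, ?_⟩, rfl⟩
  · intro k
    have hcongr : (∑ j, if c j = k then ((W j : ℝ)) else 0)
        = ∑ j, if c j = k then wk k j else 0 := by
      refine Finset.sum_congr rfl fun j _ => ?_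
      by_cases hc : c j = k
      · simp [W, hc]
      · simp [hc]
    rw [hcongr, hwksum k]
  · refine Submodule.mem_span_pair.2 ⟨a, u, ?_⟩
    funext k
    have hcongr : (∑ j, if c j = k then ((W j : ℝ) : ℂ) * p j else 0)
        = ∑ j, if c j = k then (wk k j : ℂ) * p j else 0 := by
      refine Finset.sum_congr rfl fun j _ => ?_
      by_cases hc : c j = k
      · simp [W, hc]
      · simp [hc]
    simp only [Pi.add_apply, Pi.smul_apply, smul_eq_mul, mul_one]
    rw [hcongr, hwkvec k, hpoly k]

end PolyAux

end PolyAux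

theorem polygon_partition_optimality (r : ℕ) (hr : 3 ≤ r)
    (N : ℕ) (hNpos : 0 < N) (hN : N < 3 * r - 4) :
    ∃ S : Set (Fin N → ℂ),
      IsOpen S ∧ Dense S ∧ volume Sᶜ = 0 ∧
      ∀ p ∈ S,
        ¬ ∃ (c : Fin N → ZMod r) (x : ZMod r → ℂ) (a u : ℂ),
            u ≠ 0 ∧
            (∀ k : ZMod r, x k ∈ convexHull ℝ (p '' {j | c j = k})) ∧
            (∀ k : ZMod r,
              x k = a + u * Complex.exp (2 * Real.pi * Complex.I * k.val / r)) := by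
  classical
  haveI : NeZero r := ⟨by omega⟩
  refine ⟨(⋃ c : Fin N → ZMod r, PolyAux.badSet r N c)ᶜ, ?_, ?_, ?_, ?_⟩
  · exact (isClosed_iUnion_of_finite fun c => PolyAux.badSet_closed hr c).isOpen_compl
  · rw [← interior_eq_empty_iff_dense_compl]
    by_contra h
    have h1 : volume (interior (⋃ c : Fin N → ZMod r, PolyAux.badSet r N c)) ≠ 0 :=
      (isOpen_interior.measure_ne_zero volume (Set.nonempty_iff_ne_empty.2 h))
    exact h1 (le_antisymm (le_trans (measure_mono interior_subset)
      (le_of_eq (measure_iUnion_null fun c => PolyAux.badSet_null hr hN c))) zero_le)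
  · rw [compl_compl]
    exact measure_iUnion_null fun c => PolyAux.badSet_null hr hN c
  · rintro p hp ⟨c, x, a, u, hu, hhull, hpoly⟩
    exact hp (Set.mem_iUnion.2 ⟨c, PolyAux.mem_badSet hNpos c p x a u hhull hpoly⟩)
end

section
/- Let d ≥ 3 and let G be a finite subgroup of O(d) such that the induced action of G on ℂ^d (extending each element complex-linearly) is irreducible, i.e., no complex subspace other than 0 and ℂ^d is invariant under all elements of G. Suppose G contains a reflection, i.e., an element s with s² = id whose fixed subspace in ℝ^d has dimension d-1, and let G⁺ = {g ∈ G : det g = 1}. Then the action of G⁺ on ℂ^d is also irreducible. -/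
open scoped TensorProduct

/-- An orthogonal reflection of `ℝ^d`: an orthogonal involution whose fixed
subspace is a hyperplane. -/
def IsOrthoReflection {d : ℕ}
    (A : EuclideanSpace ℝ (Fin d) ≃ₗᵢ[ℝ] EuclideanSpace ℝ (Fin d)) : Prop :=
  A ^ 2 = 1 ∧
  Module.finrank ℝ
    (LinearMap.ker (A.toLinearEquiv.toLinearMap - LinearMap.id)) = d - 1


open Module Submodule

private lemma refl_aux {d : ℕ} (hd : 3 ≤ d)
    {s : EuclideanSpace ℝ (Fin d) ≃ₗᵢ[ℝ] EuclideanSpace ℝ (Fin d)}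
    (hs : IsOrthoReflection s) :
    LinearMap.det s.toLinearEquiv.toLinearMap = -1 ∧
    ∃ v : EuclideanSpace ℝ (Fin d),
      ∀ y, y - s.toLinearEquiv.toLinearMap y ∈ (ℝ ∙ v) := by
  obtain ⟨hs2, hrk⟩ := hs
  set f := s.toLinearEquiv.toLinearMap with hf
  have hss : s * s = 1 := by rw [← sq]; exact hs2
  have hffc : f ∘ₗ f = LinearMap.id := by
    have : (s * s).toLinearEquiv.toLinearMap = f ∘ₗ f := rfl
    rw [← this, hss]; rfl
  have hff : ∀ x, f (f x) = x := fun x => by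
    have := LinearMap.ext_iff.mp hffc x
    simpa using this
  set K₁ := LinearMap.ker (f - LinearMap.id) with hK₁
  set K₂ := LinearMap.ker (f + LinearMap.id) with hK₂
  have hm1 : ∀ x, x ∈ K₁ ↔ f x = x := by
    intro x
    rw [hK₁, LinearMap.mem_ker, LinearMap.sub_apply, LinearMap.id_apply, sub_eq_zero]
  have hm2 : ∀ x, x ∈ K₂ ↔ f x = -x := by
    intro x
    rw [hK₂, LinearMap.mem_ker, LinearMap.add_apply, LinearMap.id_apply, add_eq_zero_iff_eq_neg]
  have hdisj : K₁ ⊓ K₂ = ⊥ := by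
    rw [eq_bot_iff]
    rintro x ⟨h1, h2⟩
    rw [SetLike.mem_coe, hm1] at h1
    rw [SetLike.mem_coe, hm2] at h2
    have hxx : x = -x := h1.symm.trans h2
    have h3 : (2:ℝ) • x = 0 := by
      rw [two_smul]; nth_rewrite 2 [hxx]; simp
    rcases smul_eq_zero.mp h3 with h | h
    · norm_num at h
    · simpa using h
  have hsup : K₁ ⊔ K₂ = ⊤ := by
    rw [eq_top_iff]
    intro x _
    have hx : x = ((1/2 : ℝ) • (x + f x)) + ((1/2 : ℝ) • (x - f x)) := by
      rw [smul_add, smul_sub]; module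
    rw [hx]
    refine add_mem_sup (smul_mem _ _ ?_) (smul_mem _ _ ?_)
    · rw [hm1, map_add, hff]; abel
    · rw [hm2, map_sub, hff]; abel
  have htot : finrank ℝ (EuclideanSpace ℝ (Fin d)) = d := finrank_euclideanSpace_fin
  have hr2 : finrank ℝ K₂ = 1 := by
    have h := Submodule.finrank_sup_add_finrank_inf_eq K₁ K₂
    rw [hsup, hdisj, finrank_bot, finrank_top, htot, add_zero, hrk] at h
    omega
  have hle : K₂ ≤ K₁ᗮ := by
    intro y hy
    rw [Submodule.mem_orthogonal]
    intro x hx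
    have h1 : (inner ℝ x y : ℝ) = inner ℝ (s x) (s y) := (s.inner_map_map x y).symm
    have hx' : s x = x := (hm1 x).mp hx
    have hy' : s y = -y := (hm2 y).mp hy
    rw [hx', hy', inner_neg_right] at h1
    linarith
  have hro : finrank ℝ K₁ᗮ = 1 := by
    have h := Submodule.finrank_add_finrank_orthogonal K₁
    rw [hrk, htot] at h
    omega
  have heq : K₂ = K₁ᗮ := Submodule.eq_of_le_of_finrank_eq hle (by rw [hr2, hro])
  have hrefl : f = (reflection K₁).toLinearMap := by
    apply LinearMap.ext; intro x
    have hx : x ∈ K₁ ⊔ K₂ := hsup ▸ Submodule.mem_top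
    obtain ⟨p, hp, q, hq, rfl⟩ := Submodule.mem_sup.mp hx
    have h1 : f (p + q) = p - q := by
      rw [map_add, (hm1 p).mp hp, (hm2 q).mp hq]; abel
    have h2 : reflection K₁ (p + q) = p - q := by
      rw [map_add, reflection_mem_subspace_eq_self hp,
        reflection_mem_subspace_orthogonalComplement_eq_neg (heq ▸ hq)]
      abel
    exact h1.trans h2.symm
  constructor
  · rw [hrefl]
    rw [det_reflection K₁, hro, pow_one]
  · obtain ⟨v, hv, hv0⟩ : ∃ v, v ∈ K₂ ∧ v ≠ 0 := by
      have hne : K₂ ≠ ⊥ := by intro h; rw [h, finrank_bot] at hr2; omega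
      obtain ⟨v, h1, h2⟩ := Submodule.exists_mem_ne_zero_of_ne_bot hne
      exact ⟨v, h1, h2⟩
    have hspan : (ℝ ∙ v) = K₂ :=
      Submodule.eq_of_le_of_finrank_eq
        ((Submodule.span_singleton_le_iff_mem v K₂).mpr hv)
        (by rw [finrank_span_singleton hv0, hr2])
    refine ⟨v, fun y => ?_⟩
    rw [hspan, hm2, map_sub, hff]
    abel

set_option maxHeartbeats 2000000 in
theorem rotation_subgroup_complex_irreducible
    (d : ℕ) (hd : 3 ≤ d)
    (G : Subgroup (EuclideanSpace ℝ (Fin d) ≃ₗᵢ[ℝ] EuclideanSpace ℝ (Fin d)))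
    [Fintype G]
    (habsirr : ∀ W : Submodule ℂ (ℂ ⊗[ℝ] EuclideanSpace ℝ (Fin d)),
      (∀ g ∈ G, W.map (LinearMap.baseChange ℂ g.toLinearEquiv.toLinearMap) ≤ W) →
      W = ⊥ ∨ W = ⊤)
    (hasrefl : ∃ s ∈ G, IsOrthoReflection s) :
    ∀ W : Submodule ℂ (ℂ ⊗[ℝ] EuclideanSpace ℝ (Fin d)),
      (∀ g ∈ G, LinearMap.det g.toLinearEquiv.toLinearMap = 1 →
        W.map (LinearMap.baseChange ℂ g.toLinearEquiv.toLinearMap) ≤ W) →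
      W = ⊥ ∨ W = ⊤ := by
  intro W hW
  by_contra hcon
  push_neg at hcon
  obtain ⟨hWbot, hWtop⟩ := hcon
  obtain ⟨s, hsG, hs⟩ := hasrefl
  obtain ⟨hdets, v, hv⟩ := refl_aux hd hs
  set L : (EuclideanSpace ℝ (Fin d) ≃ₗᵢ[ℝ] EuclideanSpace ℝ (Fin d)) →
      (ℂ ⊗[ℝ] EuclideanSpace ℝ (Fin d)) →ₗ[ℂ] (ℂ ⊗[ℝ] EuclideanSpace ℝ (Fin d)) :=
    fun g => LinearMap.baseChange ℂ g.toLinearEquiv.toLinearMap with hL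
  have hLmul : ∀ g h, L (g * h) = L g ∘ₗ L h := by
    intro g h
    rw [hL]
    show LinearMap.baseChange ℂ (g.toLinearEquiv.toLinearMap ∘ₗ h.toLinearEquiv.toLinearMap) = _
    rw [LinearMap.baseChange_comp]
  have hmapmul : ∀ g h (U : Submodule ℂ (ℂ ⊗[ℝ] EuclideanSpace ℝ (Fin d))),
      U.map (L (g * h)) = (U.map (L h)).map (L g) := by
    intro g h U
    rw [hLmul, Submodule.map_comp]
  have hdetmul : ∀ g h : EuclideanSpace ℝ (Fin d) ≃ₗᵢ[ℝ] EuclideanSpace ℝ (Fin d),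
      LinearMap.det (g * h).toLinearEquiv.toLinearMap =
        LinearMap.det g.toLinearEquiv.toLinearMap * LinearMap.det h.toLinearEquiv.toLinearMap := by
    intro g h
    rw [show (g * h).toLinearEquiv.toLinearMap
      = g.toLinearEquiv.toLinearMap ∘ₗ h.toLinearEquiv.toLinearMap from rfl, LinearMap.det_comp]
  have hss : s * s = 1 := by rw [← sq]; exact hs.1
  -- determinants are ±1
  have hdet_pm : ∀ g ∈ G, LinearMap.det g.toLinearEquiv.toLinearMap = 1 ∨
      LinearMap.det g.toLinearEquiv.toLinearMap = -1 := by
    intro g hg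
    have hpow : ∀ (n : ℕ) (h : EuclideanSpace ℝ (Fin d) ≃ₗᵢ[ℝ] EuclideanSpace ℝ (Fin d)),
        LinearMap.det (h ^ n).toLinearEquiv.toLinearMap
          = (LinearMap.det h.toLinearEquiv.toLinearMap) ^ n := by
      intro n h
      induction n with
      | zero =>
        rw [pow_zero, pow_zero, show ((1 : EuclideanSpace ℝ (Fin d) ≃ₗᵢ[ℝ]
          EuclideanSpace ℝ (Fin d))).toLinearEquiv.toLinearMap = LinearMap.id from rfl,
          LinearMap.det_id]
      | succ n ih => rw [pow_succ, hdetmul, ih, pow_succ]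
    have hcard : g ^ Fintype.card G = 1 := by
      have h1 : (⟨g, hg⟩ : G) ^ Fintype.card G = 1 := pow_card_eq_one
      have h2 := congrArg (Subtype.val) h1
      rw [SubmonoidClass.coe_pow, OneMemClass.coe_one] at h2
      exact h2
    have h3 : (LinearMap.det g.toLinearEquiv.toLinearMap) ^ Fintype.card G = 1 := by
      rw [← hpow, hcard, show ((1 : EuclideanSpace ℝ (Fin d) ≃ₗᵢ[ℝ]
        EuclideanSpace ℝ (Fin d))).toLinearEquiv.toLinearMap = LinearMap.id from rfl,
        LinearMap.det_id]
    have hne : Fintype.card G ≠ 0 := Fintype.card_ne_zero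
    rcases (pow_eq_one_iff_of_ne_zero hne).mp h3 with h | h
    · exact Or.inl h
    · exact Or.inr h.1
  set W' := W.map (L s) with hW'
  -- invariance of W' under G⁺
  have hWs : ∀ g ∈ G, LinearMap.det g.toLinearEquiv.toLinearMap = 1 →
      W'.map (L g) ≤ W' := by
    intro g hg hdet1
    have h1 : g * s = s * (s * g * s) := by
      rw [← mul_assoc, ← mul_assoc, hss, one_mul]
    have hmem : s * g * s ∈ G := mul_mem (mul_mem hsG hg) hsG
    have hdet' : LinearMap.det (s * g * s).toLinearEquiv.toLinearMap = 1 := by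
      rw [hdetmul, hdetmul, hdets, hdet1]; ring
    calc (W.map (L s)).map (L g) = W.map (L (g * s)) := (hmapmul g s W).symm
      _ = W.map (L (s * (s * g * s))) := by rw [h1]
      _ = (W.map (L (s * g * s))).map (L s) := hmapmul _ _ W
      _ ≤ W.map (L s) := Submodule.map_mono (hW _ hmem hdet')
  have hcross : ∀ g ∈ G, LinearMap.det g.toLinearEquiv.toLinearMap = -1 →
      W.map (L g) ≤ W' ∧ W'.map (L g) ≤ W := by
    intro g hg hdet1
    constructor
    · have h1 : g = s * (s * g) := by rw [← mul_assoc, hss, one_mul]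
      have hdet' : LinearMap.det (s * g).toLinearEquiv.toLinearMap = 1 := by
        rw [hdetmul, hdets, hdet1]; ring
      calc W.map (L g) = W.map (L (s * (s * g))) := by rw [← h1]
        _ = (W.map (L (s * g))).map (L s) := hmapmul _ _ W
        _ ≤ W.map (L s) := Submodule.map_mono (hW _ (mul_mem hsG hg) hdet')
    · have hdet' : LinearMap.det (g * s).toLinearEquiv.toLinearMap = 1 := by
        rw [hdetmul, hdets, hdet1]; ring
      calc (W.map (L s)).map (L g) = W.map (L (g * s)) := (hmapmul g s W).symm
        _ ≤ W := hW _ (mul_mem hg hsG) hdet'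
  -- W ⊔ W' and W ⊓ W' are G-invariant
  have hsupinv : ∀ g ∈ G, (W ⊔ W').map (L g) ≤ W ⊔ W' := by
    intro g hg
    rw [Submodule.map_sup]
    rcases hdet_pm g hg with h1 | h1
    · exact sup_le_sup (hW g hg h1) (hWs g hg h1)
    · obtain ⟨ha, hb⟩ := hcross g hg h1
      calc W.map (L g) ⊔ W'.map (L g) ≤ W' ⊔ W := sup_le_sup ha hb
        _ = W ⊔ W' := sup_comm _ _
  have hinfinv : ∀ g ∈ G, (W ⊓ W').map (L g) ≤ W ⊓ W' := by
    intro g hg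
    refine le_trans (Submodule.map_inf_le _) ?_
    rcases hdet_pm g hg with h1 | h1
    · exact inf_le_inf (hW g hg h1) (hWs g hg h1)
    · obtain ⟨ha, hb⟩ := hcross g hg h1
      calc W.map (L g) ⊓ W'.map (L g) ≤ W' ⊓ W := inf_le_inf ha hb
        _ = W ⊓ W' := inf_comm _ _
  have htop : W ⊔ W' = ⊤ := by
    rcases habsirr (W ⊔ W') hsupinv with h | h
    · exact absurd (le_bot_iff.mp (h ▸ (le_sup_left : W ≤ W ⊔ W'))) hWbot
    · exact h
  have hbot : W ⊓ W' = ⊥ := by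
    rcases habsirr (W ⊓ W') hinfinv with h | h
    · exact h
    · exact absurd (top_le_iff.mp (h ▸ (inf_le_left : W ⊓ W' ≤ W))) hWtop
  -- dimension count
  have htotal : finrank ℂ (ℂ ⊗[ℝ] EuclideanSpace ℝ (Fin d)) = d := by
    rw [Module.finrank_baseChange, finrank_euclideanSpace_fin]
  have hss' : L s ∘ₗ L s = LinearMap.id := by
    rw [← hLmul, hss]
    rw [hL]
    show LinearMap.baseChange ℂ (LinearMap.id) = _
    ext x
    simp
  have hrankW' : finrank ℂ W' = finrank ℂ W := by
    have h := LinearEquiv.finrank_map_eq (LinearEquiv.ofLinear (L s) (L s) hss' hss') W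
    rwa [show ((LinearEquiv.ofLinear (L s) (L s) hss' hss' :
      (ℂ ⊗[ℝ] EuclideanSpace ℝ (Fin d)) ≃ₗ[ℂ] (ℂ ⊗[ℝ] EuclideanSpace ℝ (Fin d))) :
      (ℂ ⊗[ℝ] EuclideanSpace ℝ (Fin d)) →ₗ[ℂ] (ℂ ⊗[ℝ] EuclideanSpace ℝ (Fin d))) = L s
      from rfl] at h
  have hdim : finrank ℂ W + finrank ℂ W = d := by
    have h := Submodule.finrank_sup_add_finrank_inf_eq W W'
    rw [htop, hbot, finrank_bot, finrank_top, htotal, add_zero, hrankW'] at h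
    omega
  -- the injection into a line
  set v' : ℂ ⊗[ℝ] EuclideanSpace ℝ (Fin d) := (1 : ℂ) ⊗ₜ[ℝ] v with hv'
  have hmem : ∀ x : ℂ ⊗[ℝ] EuclideanSpace ℝ (Fin d), x - L s x ∈ (ℂ ∙ v') := by
    intro x
    induction x using TensorProduct.induction_on with
    | zero => simpa using Submodule.zero_mem _
    | tmul a m =>
      rw [hL]
      show a ⊗ₜ[ℝ] m - LinearMap.baseChange ℂ s.toLinearEquiv.toLinearMap (a ⊗ₜ[ℝ] m) ∈ _
      rw [LinearMap.baseChange_tmul, ← TensorProduct.tmul_sub]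
      obtain ⟨c, hc⟩ := Submodule.mem_span_singleton.mp (hv m)
      rw [← hc, TensorProduct.tmul_smul]
      refine Submodule.smul_of_tower_mem _ c ?_
      rw [show a ⊗ₜ[ℝ] v = a • v' from by
        rw [hv', TensorProduct.smul_tmul', smul_eq_mul, mul_one]]
      exact Submodule.smul_mem _ a (Submodule.mem_span_singleton_self v')
    | add x y hx hy =>
      have h : (x + y) - L s (x + y) = (x - L s x) + (y - L s y) := by
        rw [map_add]; abel
      rw [h]
      exact Submodule.add_mem _ hx hy
  set φ : W →ₗ[ℂ] (ℂ ∙ v') :=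
    LinearMap.codRestrict _ ((LinearMap.id - L s) ∘ₗ W.subtype)
      (fun w => by simpa using hmem (w : ℂ ⊗[ℝ] EuclideanSpace ℝ (Fin d))) with hφ
  have hφinj : Function.Injective φ := by
    rw [← LinearMap.ker_eq_bot, eq_bot_iff]
    intro w hw
    have h0 : ((LinearMap.id - L s) ∘ₗ W.subtype) w = 0 := by
      have := (LinearMap.mem_ker.mp hw)
      have h1 := congrArg (Subtype.val) this
      simpa [hφ] using h1
    have h2 : (w : ℂ ⊗[ℝ] EuclideanSpace ℝ (Fin d)) = L s w := by
      simp only [LinearMap.comp_apply, LinearMap.sub_apply, LinearMap.id_apply,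
        Submodule.coe_subtype] at h0
      exact sub_eq_zero.mp h0
    have hmem' : (w : ℂ ⊗[ℝ] EuclideanSpace ℝ (Fin d)) ∈ W' := by
      rw [hW']
      exact Submodule.mem_map.mpr ⟨w, w.2, h2.symm⟩
    have hb : (w : ℂ ⊗[ℝ] EuclideanSpace ℝ (Fin d)) ∈ W ⊓ W' := ⟨w.2, hmem'⟩
    rw [hbot, Submodule.mem_bot] at hb
    exact Submodule.mem_bot (R := ℂ) .. |>.mpr (Subtype.ext hb)
  have hle1 : finrank ℂ W ≤ finrank ℂ (ℂ ∙ v') :=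
    LinearMap.finrank_le_finrank_of_injective hφinj
  have hle2 : finrank ℂ (ℂ ∙ v') ≤ 1 := by
    by_cases h : v' = 0
    · rw [h, Submodule.span_zero_singleton, finrank_bot]
      omega
    · rw [finrank_span_singleton h]
  omega
end
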